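/- arXiv:1106.5149 — 9 statements merged into one kernel-verified Lean document; each statement's English description precedes it below -/
import Mathlib

section
/- Let n be an odd prime and r, s integers with s ≥ 1, 4s − r² > 0, 4s − r² not a perfect square, and n not dividing s·(4s − r²). Let λ and μ be integers with λ² + rλ + s ≡ 0 (mod n) and μ² + 1 ≡ 0 (mod n), and let K = {(x₁,x₂,x₃,x₄) ∈ ℤ⁴ : n divides x₁ + λx₂ + μx₃ + λμx₄}. Then there exist four vectors v₁, v₂, v₃, v₄ ∈ K that are linearly independent over ℚ and whose rectangle norms all are < 51.5·√(1 + |r| + s)·n^(1/4). -/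
/-!
Identify `ℤ⁴` with the order `ℤ[ω, i]`, where `ω² + rω + s = 0` and `i² = -1`, through the basis
`1, ω, i, ωi`. The map `x ↦ x₁ + λx₂ + μx₃ + λμx₄ (mod n)` is the ring map `ω ↦ λ, i ↦ μ`, so its
kernel `K` is an ideal. By pigeonhole `K` contains a nonzero `α` with `|x₁|, |x₃| ≤ A ≈ √D n^{1/4}`
and `|x₂|, |x₄| ≤ B ≈ n^{1/4} / √D`, where `D = 1 + |r| + s`; then `α, ωα, iα, ωiα ∈ K` all have
rectangle norm at most `A + (s + |r|) B ≤ 2 √D n^{1/4}`. They are independent because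
`ℚ(ω, i)` is a field (`ℚ(ω) = ℚ(√-(4s - r²)) ≠ ℚ(i)` as `4s - r²` is not a square), so
multiplication by `α ≠ 0` has nonzero determinant `|N_{ℚ(ω,i)/ℚ(i)}(α)|²`.
-/

theorem exists_ne_zero_abs_le_map_eq_zero_of_card_lt {ι G : Type*} [Fintype ι] [DecidableEq ι]
    [AddGroup G] [Fintype G] (φ : (ι → ℤ) →+ G) (b : ι → ℕ)
    (hcard : Fintype.card G < ∏ i, (b i + 1)) :
    ∃ x : ι → ℤ, x ≠ 0 ∧ (∀ i, |x i| ≤ b i) ∧ φ x = 0 := by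
  obtain ⟨p, q, hpq, hφ⟩ := Fintype.exists_ne_map_eq_of_card_lt
    (fun p : ∀ i, Fin (b i + 1) => φ fun i => (p i : ℤ)) (by simpa using hcard)
  refine ⟨fun i => (p i : ℤ) - q i, fun h => hpq (funext fun i => Fin.ext ?_), fun i => ?_, ?_⟩
  · have := congrFun h i
    simp only [Pi.zero_apply, sub_eq_zero] at this
    exact_mod_cast this
  · have := (p i).isLt
    have := (q i).isLt
    show |(p i : ℤ) - q i| ≤ b i
    rw [abs_le]
    omega
  · rw [show (fun i => (p i : ℤ) - q i) = (fun i => (p i : ℤ)) - fun i => (q i : ℤ) from rfl,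
      map_sub, sub_eq_zero]
    exact hφ

theorem Int.isSquare_of_mul_sq_eq_sq {d m k : ℤ} (hm : m ≠ 0) (h : d * m ^ 2 = k ^ 2) :
    IsSquare d := by
  obtain ⟨c, rfl⟩ : m ∣ k := (Int.pow_dvd_pow_iff two_ne_zero).mp ⟨d, by rw [← h]; ring⟩
  exact ⟨c, mul_left_cancel₀ (pow_ne_zero 2 hm) (by linear_combination h)⟩

theorem eq_zero_of_sq_add_mul_sq_eq_zero {d p q : ℤ} (hd : 0 < d) (h : p ^ 2 + d * q ^ 2 = 0) :
    p = 0 ∧ q = 0 := by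
  have hq : d * q ^ 2 = 0 := by nlinarith [sq_nonneg p, mul_nonneg hd.le (sq_nonneg q)]
  have hp : p ^ 2 = 0 := by linarith
  exact ⟨pow_eq_zero_iff two_ne_zero |>.mp hp,
    pow_eq_zero_iff two_ne_zero |>.mp ((mul_eq_zero.mp hq).resolve_left hd.ne')⟩

/-- Otherwise Lagrange's identity `(p² + dq²)(p'² + dq'²) = (pp' + dqq')² + d(pq' - p'q)²`
exhibits `d` as a square. -/
theorem eq_zero_of_sq_add_mul_sq_eq {d p q p' q' : ℤ} (hd : 0 < d) (hnsq : ¬ IsSquare d)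
    (hnorm : p ^ 2 + d * q ^ 2 = p' ^ 2 + d * q' ^ 2) (horth : p * p' + d * q * q' = 0) :
    p = 0 ∧ q = 0 ∧ p' = 0 ∧ q' = 0 := by
  have hcross : p * q' - p' * q = 0 := by
    by_contra hm
    exact hnsq <| Int.isSquare_of_mul_sq_eq_sq (k := p ^ 2 + d * q ^ 2) hm <| by
      linear_combination (-(p ^ 2 + d * q ^ 2)) * hnorm - (p * p' + d * q * q') * horth
  have hN : p ^ 2 + d * q ^ 2 = 0 := pow_eq_zero_iff two_ne_zero |>.mp <| by
    linear_combination (p ^ 2 + d * q ^ 2) * hnorm + (p * p' + d * q * q') * horth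
      + d * (p * q' - p' * q) * hcross
  obtain ⟨hp, hq⟩ := eq_zero_of_sq_add_mul_sq_eq_zero hd hN
  obtain ⟨hp', hq'⟩ := eq_zero_of_sq_add_mul_sq_eq_zero hd (hnorm ▸ hN)
  exact ⟨hp, hq, hp', hq'⟩

theorem exists_lt_succ_mul_succ_sq_le (q D : ℕ) (hD : 0 < D) :
    ∃ A B : ℕ, q < (A + 1) * (B + 1) ∧ A ^ 2 ≤ D * q ∧ D * B ^ 2 ≤ q := by
  set B := Nat.sqrt (q / D)
  set A := q / (B + 1)
  have hqB : q < D * (B + 1) ^ 2 := by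
    rw [mul_comm]
    exact (Nat.div_lt_iff_lt_mul hD).mp (Nat.lt_succ_sqrt' _)
  have hAB : A * (B + 1) ≤ q := Nat.div_mul_le_self q (B + 1)
  refine ⟨A, B, ?_, ?_, ?_⟩
  · simpa [mul_comm] using Nat.lt_mul_div_succ q (Nat.succ_pos B)
  · refine Nat.le_of_mul_le_mul_right ?_ (pow_pos (Nat.succ_pos B) 2)
    calc A ^ 2 * (B + 1) ^ 2 = (A * (B + 1)) ^ 2 := by ring
      _ ≤ q * q := by rw [sq]; exact Nat.mul_le_mul hAB hAB
      _ ≤ q * (D * (B + 1) ^ 2) := Nat.mul_le_mul_left q hqB.le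
      _ = D * q * (B + 1) ^ 2 := by ring
  · exact (Nat.mul_le_mul_left D (Nat.sqrt_le' _)).trans (Nat.mul_div_le q D)

theorem natCast_le_sqrt_mul_rpow {x D q n : ℕ} (hx : x ^ 2 ≤ D * q) (hq : q ^ 2 ≤ n) :
    (x : ℝ) ≤ √D * (n : ℝ) ^ ((1 : ℝ) / 4) := by
  have hroot : ((n : ℝ) ^ ((1 : ℝ) / 4)) ^ 2 = √n := by
    rw [← Real.rpow_natCast, ← Real.rpow_mul (by positivity), Real.sqrt_eq_rpow]
    norm_num
  have hq' : (q : ℝ) ≤ √n := Real.le_sqrt_of_sq_le (by exact_mod_cast hq)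
  refine (pow_le_pow_iff_left₀ (by positivity) (by positivity) two_ne_zero).mp ?_
  rw [mul_pow, Real.sq_sqrt (by positivity), hroot]
  calc (x : ℝ) ^ 2 ≤ D * q := by exact_mod_cast hx
    _ ≤ D * √n := by gcongr

namespace GLV

variable (r s : ℤ)

/-- Multiplication by `ω` on `ℤ[ω, i]` in the basis `1, ω, i, ωi`, using `ω² = -rω - s`. -/
def mulOmega (x : Fin 4 → ℤ) : Fin 4 → ℤ :=
  ![-(s * x 1), x 0 - r * x 1, -(s * x 3), x 2 - r * x 3]

def mulI (x : Fin 4 → ℤ) : Fin 4 → ℤ := ![-x 2, -x 3, x 0, x 1]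

def glvMap (lam mu : ℤ) (x : Fin 4 → ℤ) : ℤ := x 0 + lam * x 1 + mu * x 2 + lam * mu * x 3

theorem glvMap_mulOmega (lam mu : ℤ) (x : Fin 4 → ℤ) :
    glvMap lam mu (mulOmega r s x)
      = lam * glvMap lam mu x - (lam ^ 2 + r * lam + s) * (x 1 + mu * x 3) := by
  simp only [glvMap, mulOmega, Fin.isValue, Matrix.cons_val, mul_neg]
  ring

theorem glvMap_mulI (lam mu : ℤ) (x : Fin 4 → ℤ) :
    glvMap lam mu (mulI x) = mu * glvMap lam mu x - (mu ^ 2 + 1) * (x 2 + lam * x 3) := by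
  simp only [glvMap, mulI, Fin.isValue, Matrix.cons_val, mul_neg]
  ring

/-- The matrix of multiplication by `x` on `ℤ[ω, i]`. -/
def mulMatrix (x : Fin 4 → ℤ) : Matrix (Fin 4) (Fin 4) ℤ :=
  Matrix.of ![x, mulOmega r s x, mulI x, mulI (mulOmega r s x)]

/-- The norm of `a + bω` from `ℚ(ω)` to `ℚ`. -/
def omegaNorm (a b : ℤ) : ℤ := a ^ 2 - r * a * b + s * b ^ 2

def omegaPolar (a b c e : ℤ) : ℤ := 2 * a * c - r * (a * e + b * c) + 2 * s * b * e

theorem four_mul_omegaNorm (a b : ℤ) :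
    4 * omegaNorm r s a b = (2 * a - r * b) ^ 2 + (4 * s - r ^ 2) * b ^ 2 := by
  unfold omegaNorm
  ring

theorem two_mul_omegaPolar (a b c e : ℤ) :
    2 * omegaPolar r s a b c e = (2 * a - r * b) * (2 * c - r * e) + (4 * s - r ^ 2) * b * e := by
  unfold omegaPolar
  ring

/-- For `u = x₀ + x₁ω` and `v = x₂ + x₃ω`, the norm of `u + vi` from `ℚ(ω, i)` to `ℚ(i)` is
`N(u) - N(v) + (uv̄ + ūv) i`, and the determinant is the square of its absolute value. -/
theorem det_mulMatrix (x : Fin 4 → ℤ) :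
    (mulMatrix r s x).det = (omegaNorm r s (x 0) (x 1) - omegaNorm r s (x 2) (x 3)) ^ 2
      + omegaPolar r s (x 0) (x 1) (x 2) (x 3) ^ 2 := by
  rw [mulMatrix, Matrix.det_succ_row_zero, Fin.sum_univ_four]
  simp only [Matrix.det_fin_three, Matrix.submatrix_apply, Fin.succAbove, Fin.reduceSucc,
    Fin.reduceCastSucc, Fin.reduceLT, ↓reduceIte, Fin.isValue, Fin.coe_ofNat_eq_mod,
    Matrix.of_apply, Matrix.cons_val, mulOmega, mulI, omegaNorm, omegaPolar]
  ring

variable {r s}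

theorem det_mulMatrix_ne_zero (hpos : 0 < 4 * s - r ^ 2) (hnsq : ¬ IsSquare (4 * s - r ^ 2))
    {x : Fin 4 → ℤ} (hx : x ≠ 0) : (mulMatrix r s x).det ≠ 0 := by
  intro hdet
  rw [det_mulMatrix] at hdet
  obtain ⟨hnorm, hpolar⟩ := (add_eq_zero_iff_of_nonneg (sq_nonneg _) (sq_nonneg _)).mp hdet
  have hnorm : omegaNorm r s (x 0) (x 1) - omegaNorm r s (x 2) (x 3) = 0 :=
    pow_eq_zero_iff two_ne_zero |>.mp hnorm
  have hpolar : omegaPolar r s (x 0) (x 1) (x 2) (x 3) = 0 :=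
    pow_eq_zero_iff two_ne_zero |>.mp hpolar
  obtain ⟨h0, h1, h2, h3⟩ := eq_zero_of_sq_add_mul_sq_eq (p := 2 * x 0 - r * x 1) (q := x 1)
    (p' := 2 * x 2 - r * x 3) (q' := x 3) hpos hnsq
    (by linear_combination 4 * hnorm - four_mul_omegaNorm r s (x 0) (x 1)
      + four_mul_omegaNorm r s (x 2) (x 3))
    (by linear_combination 2 * hpolar - two_mul_omegaPolar r s (x 0) (x 1) (x 2) (x 3))
  apply hx
  funext i
  fin_cases i
  · simpa [h1] using h0
  · exact h1
  · simpa [h3] using h2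
  · exact h3

theorem linearIndependent_mulMatrix (hpos : 0 < 4 * s - r ^ 2)
    (hnsq : ¬ IsSquare (4 * s - r ^ 2)) {x : Fin 4 → ℤ} (hx : x ≠ 0) :
    LinearIndependent ℚ fun j i => (mulMatrix r s x j i : ℚ) := by
  refine Matrix.linearIndependent_rows_of_det_ne_zero (A := (mulMatrix r s x).map Int.cast) ?_
  rw [← Int.cast_det]
  exact_mod_cast det_mulMatrix_ne_zero hpos hnsq hx

section Kernel

variable {n lam mu : ℤ} {x : Fin 4 → ℤ}

theorem dvd_glvMap_mulOmega (hlam : n ∣ lam ^ 2 + r * lam + s) (hx : n ∣ glvMap lam mu x) :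
    n ∣ glvMap lam mu (mulOmega r s x) := by
  rw [glvMap_mulOmega]
  exact dvd_sub (dvd_mul_of_dvd_right hx _) (dvd_mul_of_dvd_left hlam _)

theorem dvd_glvMap_mulI (hmu : n ∣ mu ^ 2 + 1) (hx : n ∣ glvMap lam mu x) :
    n ∣ glvMap lam mu (mulI x) := by
  rw [glvMap_mulI]
  exact dvd_sub (dvd_mul_of_dvd_right hx _) (dvd_mul_of_dvd_left hmu _)

theorem dvd_glvMap_mulMatrix (hlam : n ∣ lam ^ 2 + r * lam + s) (hmu : n ∣ mu ^ 2 + 1)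
    (hx : n ∣ glvMap lam mu x) (j : Fin 4) : n ∣ glvMap lam mu (mulMatrix r s x j) := by
  fin_cases j
  · exact hx
  · exact dvd_glvMap_mulOmega hlam hx
  · exact dvd_glvMap_mulI hmu hx
  · exact dvd_glvMap_mulI hmu (dvd_glvMap_mulOmega hlam hx)

end Kernel

def InBox (A B : ℤ) (x : Fin 4 → ℤ) : Prop := |x 0| ≤ A ∧ |x 1| ≤ B ∧ |x 2| ≤ A ∧ |x 3| ≤ B

def rectNorm (x : Fin 4 → ℤ) : ℤ := max (max |x 0| |x 1|) (max |x 2| |x 3|)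

section Box

variable {A B : ℤ} {x : Fin 4 → ℤ}

theorem InBox.rectNorm_le (hx : InBox A B x) : rectNorm x ≤ max A B :=
  max_le (max_le_max hx.1 hx.2.1) (max_le_max hx.2.2.1 hx.2.2.2)

theorem InBox.mulI (hx : InBox A B x) : InBox A B (mulI x) := by
  obtain ⟨h0, h1, h2, h3⟩ := hx
  simpa [InBox, GLV.mulI] using ⟨h2, h3, h0, h1⟩

theorem InBox.mulOmega (hs : 0 ≤ s) (hx : InBox A B x) :
    InBox (s * B) (A + |r| * B) (mulOmega r s x) := by
  obtain ⟨h0, h1, h2, h3⟩ := hx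
  have hr : 0 ≤ |r| := abs_nonneg r
  refine ⟨?_, ?_, ?_, ?_⟩ <;>
    simp only [GLV.mulOmega, Matrix.cons_val, abs_neg, abs_mul, abs_of_nonneg hs]
  · exact mul_le_mul_of_nonneg_left h1 hs
  · exact (abs_sub _ _).trans (by rw [abs_mul]; nlinarith)
  · exact mul_le_mul_of_nonneg_left h3 hs
  · exact (abs_sub _ _).trans (by rw [abs_mul]; nlinarith)

theorem rectNorm_mulMatrix_le (hs : 0 < s) (hx : InBox A B x) (j : Fin 4) :
    rectNorm (mulMatrix r s x j) ≤ A + (s + |r|) * B := by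
  have hA : 0 ≤ A := (abs_nonneg _).trans hx.1
  have hB : 0 ≤ B := (abs_nonneg _).trans hx.2.1
  have hr : 0 ≤ |r| := abs_nonneg r
  have h₁ : max A B ≤ A + (s + |r|) * B := max_le (by nlinarith) (by nlinarith)
  have h₂ : max (s * B) (A + |r| * B) ≤ A + (s + |r|) * B := max_le (by nlinarith) (by nlinarith)
  fin_cases j
  · exact hx.rectNorm_le.trans h₁
  · exact (hx.mulOmega hs.le).rectNorm_le.trans h₂
  · exact hx.mulI.rectNorm_le.trans h₁
  · exact (hx.mulOmega hs.le).mulI.rectNorm_le.trans h₂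

end Box

theorem exists_ne_zero_inBox_dvd_glvMap {n : ℕ} (hn : 0 < n) (lam mu : ℤ) (A B : ℕ)
    (h : n < ((A + 1) * (B + 1)) ^ 2) :
    ∃ x : Fin 4 → ℤ, x ≠ 0 ∧ InBox A B x ∧ (n : ℤ) ∣ glvMap lam mu x := by
  have : NeZero n := ⟨hn.ne'⟩
  let φ : (Fin 4 → ℤ) →+ ZMod n :=
    AddMonoidHom.mk' (fun x => (glvMap lam mu x : ZMod n)) fun x y => by
      simp only [glvMap, Pi.add_apply]
      push_cast
      ring
  have hcard : Fintype.card (ZMod n) < ∏ i, (![A, B, A, B] i + 1) := by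
    rw [ZMod.card, Fin.prod_univ_four]
    convert h using 1
    simp only [Fin.isValue, Matrix.cons_val]
    ring
  obtain ⟨x, hx0, hxb, hφ⟩ := exists_ne_zero_abs_le_map_eq_zero_of_card_lt φ _ hcard
  exact ⟨x, hx0, ⟨hxb 0, hxb 1, hxb 2, hxb 3⟩, (ZMod.intCast_zmod_eq_zero_iff_dvd _ n).mp hφ⟩

end GLV

theorem glv_reduced_basis_general
    (n : ℕ) (hn : n.Prime)
    (r s : ℤ)
    (hpos : 0 < 4 * s - r ^ 2)
    (hnsq : ¬ IsSquare (4 * s - r ^ 2))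
    (lam mu : ℤ)
    (hlam : (n : ℤ) ∣ lam ^ 2 + r * lam + s)
    (hmu : (n : ℤ) ∣ mu ^ 2 + 1) :
    ∃ v : Fin 4 → (Fin 4 → ℤ),
      (∀ j, (n : ℤ) ∣ v j 0 + lam * v j 1 + mu * v j 2 + lam * mu * v j 3) ∧
      LinearIndependent ℚ (fun j i => ((v j i : ℚ))) ∧
      (∀ j, ((max (max |v j 0| |v j 1|) (max |v j 2| |v j 3|) : ℤ) : ℝ) <
        51.5 * Real.sqrt ((1 + |r| + s : ℤ) : ℝ) * (n : ℝ) ^ ((1 : ℝ) / 4)) := by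
  have hs : 0 < s := by nlinarith [sq_nonneg r]
  obtain ⟨D, hD⟩ : ∃ D : ℕ, (D : ℤ) = 1 + |r| + s := ⟨_, Int.toNat_of_nonneg (by positivity)⟩
  have hD0 : 0 < D := by have := abs_nonneg r; omega
  obtain ⟨A, B, hAB, hA, hB⟩ := exists_lt_succ_mul_succ_sq_le (Nat.sqrt n) D hD0
  obtain ⟨x, hx, hbox, hker⟩ := GLV.exists_ne_zero_inBox_dvd_glvMap hn.pos lam mu A B
    ((Nat.lt_succ_sqrt' n).trans_le (Nat.pow_le_pow_left hAB 2))
  refine ⟨GLV.mulMatrix r s x, GLV.dvd_glvMap_mulMatrix hlam hmu hker,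
    GLV.linearIndependent_mulMatrix hpos hnsq hx, fun j => ?_⟩
  have hAr := natCast_le_sqrt_mul_rpow hA (Nat.sqrt_le' n)
  have hBr := natCast_le_sqrt_mul_rpow (x := D * B)
    (by rw [mul_pow, sq D, mul_assoc]; exact Nat.mul_le_mul_left D hB) (Nat.sqrt_le' n)
  have hsr : ((s + |r| : ℤ) : ℝ) ≤ D := by exact_mod_cast (by omega : s + |r| ≤ D)
  have hbound : (0 : ℝ) < √D * (n : ℝ) ^ ((1 : ℝ) / 4) := by
    have := hn.pos
    positivity
  rw [← hD]
  calc ((GLV.rectNorm (GLV.mulMatrix r s x j) : ℤ) : ℝ) ≤ ((A + (s + |r|) * B : ℤ) : ℝ) := by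
        exact_mod_cast GLV.rectNorm_mulMatrix_le hs hbox j
    _ ≤ A + D * B := by push_cast at hsr ⊢; gcongr
    _ ≤ 2 * (√D * (n : ℝ) ^ ((1 : ℝ) / 4)) := by push_cast at hBr; linarith
    _ < 51.5 * √((D : ℤ) : ℝ) * (n : ℝ) ^ ((1 : ℝ) / 4) := by push_cast; linarith

/-- Existence of a reduced basis of the four-dimensional GLV kernel lattice:
four ℚ-linearly independent vectors of the kernel with rectangle norms
`< 51.5·√(1+|r|+s)·n^(1/4)`. -/
theorem glv_reduced_basis
    (n : ℕ) (hn : n.Prime) (hodd : Odd n)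
    (r s : ℤ) (hs : 1 ≤ s)
    (hpos : 0 < 4 * s - r ^ 2)
    (hnsq : ¬ IsSquare (4 * s - r ^ 2))
    (hndvd : ¬ (n : ℤ) ∣ s * (4 * s - r ^ 2))
    (lam mu : ℤ)
    (hlam : (n : ℤ) ∣ lam ^ 2 + r * lam + s)
    (hmu : (n : ℤ) ∣ mu ^ 2 + 1) :
    ∃ v : Fin 4 → (Fin 4 → ℤ),
      (∀ j, (n : ℤ) ∣ v j 0 + lam * v j 1 + mu * v j 2 + lam * mu * v j 3) ∧
      LinearIndependent ℚ (fun j i => ((v j i : ℚ))) ∧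
      (∀ j, ((max (max |v j 0| |v j 1|) (max |v j 2| |v j 3|) : ℤ) : ℝ) <
        51.5 * Real.sqrt ((1 + |r| + s : ℤ) : ℝ) * (n : ℝ) ^ ((1 : ℝ) / 4)) :=
  glv_reduced_basis_general n hn r s hpos hnsq lam mu hlam hmu
end

section
/- Let n ≥ 1 be an integer and λ, μ integers. Then the subgroup K = {(x₁,x₂,x₃,x₄) ∈ ℤ⁴ : n divides x₁ + λx₂ + μx₃ + λμx₄} of ℤ⁴ is equal to the set of ℤ-linear combinations of the four vectors w₁ = (n, 0, 0, 0), w₂ = (−λ, 1, 0, 0), w₃ = (−μ, 0, 1, 0), w₄ = (λμ, −μ, −λ, 1). -/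
/-! Since `F w₂ = F w₃ = F w₄ = 0` and `F w₁ = n`, every integer combination of the `wᵢ` lies in
the kernel. Conversely, `x - (x₂ + μx₄) w₂ - (x₃ + λx₄) w₃ - x₄ w₄ = (F x, 0, 0, 0)`, which is an
integer multiple of `w₁` exactly when `n ∣ F x`. -/

section GLV

variable {R : Type*} [CommRing R]

def glvForm (lam mu : R) (x : Fin 4 → R) : R :=
  x 0 + lam * x 1 + mu * x 2 + lam * mu * x 3

theorem glvForm_combination (n lam mu a b c d : R) :
    glvForm lam mu (a • ![n, 0, 0, 0] + b • ![-lam, 1, 0, 0] + c • ![-mu, 0, 1, 0] +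
      d • ![lam * mu, -mu, -lam, 1]) = a * n := by
  simp [glvForm]
  ring

theorem eq_glv_combination (n lam mu k : R) (x : Fin 4 → R) (hk : glvForm lam mu x = n * k) :
    x = k • ![n, 0, 0, 0] + (x 1 + mu * x 3) • ![-lam, 1, 0, 0] +
      (x 2 + lam * x 3) • ![-mu, 0, 1, 0] + x 3 • ![lam * mu, -mu, -lam, 1] := by
  have hx₀ : x 0 = n * k - lam * x 1 - mu * x 2 - lam * mu * x 3 := by
    unfold glvForm at hk
    linear_combination hk
  ext i
  fin_cases i <;> simp [hx₀] <;> ring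

end GLV

theorem glv_kernel_eq_span_general
    (n : ℕ) (lam mu : ℤ) :
    {x : Fin 4 → ℤ | (n : ℤ) ∣ x 0 + lam * x 1 + mu * x 2 + lam * mu * x 3} =
    {x : Fin 4 → ℤ | ∃ a b c d : ℤ,
      x = a • ![(n : ℤ), 0, 0, 0] + b • ![-lam, 1, 0, 0] + c • ![-mu, 0, 1, 0] +
          d • ![lam * mu, -mu, -lam, 1]} := by
  ext x
  constructor
  · rintro ⟨k, hk⟩
    exact ⟨k, _, _, _, eq_glv_combination _ lam mu k x hk⟩
  · rintro ⟨a, b, c, d, rfl⟩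
    exact ⟨a, (glvForm_combination (n : ℤ) lam mu a b c d).trans (mul_comm _ _)⟩

/-- The kernel of the four-dimensional GLV reduction map is generated over ℤ by
`w₁ = (n,0,0,0)`, `w₂ = (−λ,1,0,0)`, `w₃ = (−μ,0,1,0)`, `w₄ = (λμ,−μ,−λ,1)`. -/
theorem glv_kernel_eq_span
    (n : ℕ) (hn : 1 ≤ n) (lam mu : ℤ) :
    {x : Fin 4 → ℤ | (n : ℤ) ∣ x 0 + lam * x 1 + mu * x 2 + lam * mu * x 3} =
    {x : Fin 4 → ℤ | ∃ a b c d : ℤ,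
      x = a • ![(n : ℤ), 0, 0, 0] + b • ![-lam, 1, 0, 0] + c • ![-mu, 0, 1, 0] +
          d • ![lam * mu, -mu, -lam, 1]} :=
  glv_kernel_eq_span_general n lam mu
end

section
/- Let n ≥ 1 be an integer and λ an integer, and let ker f = {(a, b) ∈ ℤ² : n divides a + λb}. Suppose v₁, v₂ ∈ ker f are linearly independent over ℚ. Then for every integer k there exist integers k₁, k₂ such that k ≡ k₁ + k₂λ (mod n) and max(|k₁|, |k₂|) ≤ (‖v₁‖ + ‖v₂‖)/2, where ‖·‖ denotes the rectangle norm. -/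
/-!
Babai rounding: since `v₁, v₂` span `ℚ²`, write `(k, 0) = β v₁ + γ v₂` over `ℚ` and subtract the
lattice vector `round β • v₁ + round γ • v₂ ∈ ker f`. The remainder `(k₁, k₂)` still satisfies
`k₁ + k₂ λ ≡ k (mod n)`, and equals `(β - round β) v₁ + (γ - round γ) v₂`, whose coordinates are
bounded by half the sum of the corresponding coordinates of `v₁` and `v₂`.
-/

theorem LinearIndependent.exists_smul_add_smul_eq {K : Type*} [Field K] {u v : K × K}
    (h : LinearIndependent K ![u, v]) (w : K × K) : ∃ a b : K, a • u + b • v = w := by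
  have hspan := h.span_eq_top_of_card_eq_finrank (by simp)
  rw [Matrix.range_cons_cons_empty] at hspan
  exact Submodule.mem_span_pair.mp (hspan ▸ Submodule.mem_top)

theorem two_mul_abs_sub_round_mul_sub_round_mul_le {K : Type*} [Field K] [LinearOrder K]
    [IsStrictOrderedRing K] [FloorRing K] {x y z : ℤ} {β γ : K} (h : β * x + γ * y = z) :
    2 * |z - round β * x - round γ * y| ≤ |x| + |y| := by
  have hres : ((z - round β * x - round γ * y : ℤ) : K) =
      (β - round β) * x + (γ - round γ) * y := by
    push_cast; linear_combination -h
  have key : |(β - round β) * x + (γ - round γ) * y| ≤ (|(x : K)| + |(y : K)|) / 2 :=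
    calc |(β - round β) * x + (γ - round γ) * y|
        ≤ |β - round β| * |(x : K)| + |γ - round γ| * |(y : K)| := by
          simpa only [abs_mul] using abs_add_le ((β - round β) * x) ((γ - round γ) * y)
      _ ≤ 1 / 2 * |(x : K)| + 1 / 2 * |(y : K)| := by
          gcongr <;> exact abs_sub_round _
      _ = (|(x : K)| + |(y : K)|) / 2 := by ring
  rw [← hres] at key
  have : ((2 * |z - round β * x - round γ * y| : ℤ) : K) ≤ ((|x| + |y| : ℤ) : K) := by
    push_cast at key ⊢; linarith
  exact_mod_cast this

theorem two_mul_max_abs_le {a b c d p q : ℤ} (hp : 2 * |p| ≤ |a| + |c|)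
    (hq : 2 * |q| ≤ |b| + |d|) :
    2 * max |p| |q| ≤ max |a| |b| + max |c| |d| := by
  rw [mul_max_of_nonneg _ _ zero_le_two, max_le_iff]
  constructor <;>
    linarith [le_max_left |a| |b|, le_max_left |c| |d|, le_max_right |a| |b|, le_max_right |c| |d|]

theorem glv_two_dim_decomposition_general (n : ℕ) (lam : ℤ)
    (v₁ v₂ : ℤ × ℤ)
    (hv₁ : (n : ℤ) ∣ v₁.1 + lam * v₁.2)
    (hv₂ : (n : ℤ) ∣ v₂.1 + lam * v₂.2)
    (hind : LinearIndependent ℚ ![((v₁.1 : ℚ), (v₁.2 : ℚ)), ((v₂.1 : ℚ), (v₂.2 : ℚ))]) :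
    ∀ k : ℤ, ∃ k₁ k₂ : ℤ,
      k ≡ k₁ + k₂ * lam [ZMOD (n : ℤ)] ∧
      ((max |k₁| |k₂| : ℤ) : ℝ) ≤ ((max |v₁.1| |v₁.2| + max |v₂.1| |v₂.2| : ℤ) : ℝ) / 2 := by
  intro k
  obtain ⟨β, γ, hβγ⟩ := hind.exists_smul_add_smul_eq ((k : ℚ), 0)
  simp only [Prod.smul_mk, smul_eq_mul, Prod.mk_add_mk, Prod.mk.injEq] at hβγ
  set m₁ := round β
  set m₂ := round γ
  refine ⟨k - m₁ * v₁.1 - m₂ * v₂.1, 0 - m₁ * v₁.2 - m₂ * v₂.2, ?_, ?_⟩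
  · refine (Int.modEq_iff_dvd.mpr ?_).symm
    have hdiff : k - (k - m₁ * v₁.1 - m₂ * v₂.1 + (0 - m₁ * v₁.2 - m₂ * v₂.2) * lam) =
        m₁ * (v₁.1 + lam * v₁.2) + m₂ * (v₂.1 + lam * v₂.2) := by ring
    rw [hdiff]
    exact dvd_add (hv₁.mul_left m₁) (hv₂.mul_left m₂)
  · have hbound := two_mul_max_abs_le
      (two_mul_abs_sub_round_mul_sub_round_mul_le (z := k) hβγ.1)
      (two_mul_abs_sub_round_mul_sub_round_mul_le (z := 0) (by exact_mod_cast hβγ.2))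
    rw [le_div_iff₀ two_pos, mul_comm]
    exact_mod_cast hbound

/-- The two-dimensional GLV decomposition: given two ℚ-linearly independent vectors of
the kernel of `f : ℤ² → ℤ/n`, `(a,b) ↦ a + λb`, every scalar `k` decomposes as
`k ≡ k₁ + k₂λ (mod n)` with `max(|k₁|,|k₂|) ≤ (‖v₁‖+‖v₂‖)/2`. -/
theorem glv_two_dim_decomposition (n : ℕ) (hn : 1 ≤ n) (lam : ℤ)
    (v₁ v₂ : ℤ × ℤ)
    (hv₁ : (n : ℤ) ∣ v₁.1 + lam * v₁.2)
    (hv₂ : (n : ℤ) ∣ v₂.1 + lam * v₂.2)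
    (hind : LinearIndependent ℚ ![((v₁.1 : ℚ), (v₁.2 : ℚ)), ((v₂.1 : ℚ), (v₂.2 : ℚ))]) :
    ∀ k : ℤ, ∃ k₁ k₂ : ℤ,
      k ≡ k₁ + k₂ * lam [ZMOD (n : ℤ)] ∧
      ((max |k₁| |k₂| : ℤ) : ℝ) ≤ ((max |v₁.1| |v₁.2| + max |v₂.1| |v₂.2| : ℤ) : ℝ) / 2 :=
  glv_two_dim_decomposition_general n lam v₁ v₂ hv₁ hv₂ hind
end

section
/- Let n be a prime and μ an integer with 1 < μ < n and μ² ≡ −1 (mod n). Define sequences of integers by r₀ = n, r₁ = μ, t₀ = 0, t₁ = 1, and, for each j ≥ 0 with r_{j+1} > 0, q_{j+1} = ⌊r_j / r_{j+1}⌋, r_{j+2} = r_j − q_{j+1}·r_{j+1}, t_{j+2} = t_j − q_{j+1}·t_{j+1}. Let m ≥ 0 be an index such that r_m² ≥ n and r_{m+1}² < n (such m exists). Then r_{m+1}² + t_{m+1}² = n. -/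
/-! Bézout's identity `n s_j + μ t_j = r_j` gives `r_j ≡ μ t_j (mod n)`, so `n ∣ r_j² + t_j²`.
While `r_j > 0` the determinant `r_j t_{j+1} − r_{j+1} t_j` is `±n`, and the `t_j` alternate in
sign, so its two terms do not cancel and `r_m |t_{m+1}| ≤ n`. With `r_m² ≥ n` this gives
`t_{m+1}² ≤ n`, strictly because the prime `n` is not a square. Hence
`0 < r_{m+1}² + t_{m+1}² < 2n`, and this multiple of `n` is `n` itself. -/

/-- The state `(r_j, s_j, t_j)` of the extended Euclidean algorithm applied to `n` and `μ`:
`r₀ = n`, `r₁ = μ`, `s₀ = 1`, `s₁ = 0`, `t₀ = 0`, `t₁ = 1`, and as long as `r_{j+1} > 0`,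
`r_{j+2} = r_j − q_{j+1}r_{j+1}`, `s_{j+2} = s_j − q_{j+1}s_{j+1}`,
`t_{j+2} = t_j − q_{j+1}t_{j+1}` with `q_{j+1} = ⌊r_j/r_{j+1}⌋` (after the algorithm
terminates the sequences are padded with `0`). -/
def eea (n μ : ℤ) : ℕ → ℤ × ℤ × ℤ
  | 0 => (n, 1, 0)
  | 1 => (μ, 0, 1)
  | j + 2 =>
      let p := eea n μ j
      let q := eea n μ (j + 1)
      if 0 < q.1 then
        (p.1 - p.1 / q.1 * q.1, p.2.1 - p.1 / q.1 * q.2.1, p.2.2 - p.1 / q.1 * q.2.2)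
      else (0, 0, 0)

/-- The remainder sequence `r_j` of the extended Euclidean algorithm. -/
def eeaR (n μ : ℤ) (j : ℕ) : ℤ := (eea n μ j).1

/-- The cofactor sequence `s_j` of the extended Euclidean algorithm (`ns_j + μt_j = r_j`). -/
def eeaS (n μ : ℤ) (j : ℕ) : ℤ := (eea n μ j).2.1

/-- The cofactor sequence `t_j` of the extended Euclidean algorithm (`ns_j + μt_j = r_j`). -/
def eeaT (n μ : ℤ) (j : ℕ) : ℤ := (eea n μ j).2.2

lemma abs_le_abs_add_of_mul_nonneg {R : Type*} [CommRing R] [LinearOrder R]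
    [IsStrictOrderedRing R] {a b : R} (h : 0 ≤ a * b) : |a| ≤ |a + b| :=
  sq_le_sq.1 (by nlinarith [sq_nonneg b])

section ExtendedEuclid

variable (n μ : ℤ)

lemma eea_add_two (j : ℕ) :
    eea n μ (j + 2) =
      if 0 < eeaR n μ (j + 1) then
        (eeaR n μ j - eeaR n μ j / eeaR n μ (j + 1) * eeaR n μ (j + 1),
          eeaS n μ j - eeaR n μ j / eeaR n μ (j + 1) * eeaS n μ (j + 1),
          eeaT n μ j - eeaR n μ j / eeaR n μ (j + 1) * eeaT n μ (j + 1))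
      else (0, 0, 0) := by
  rw [eea]; rfl

variable {n μ} {j : ℕ}

lemma eeaR_add_two (h : 0 < eeaR n μ (j + 1)) :
    eeaR n μ (j + 2) = eeaR n μ j % eeaR n μ (j + 1) := by
  rw [eeaR, eea_add_two, if_pos h, Int.emod_def, mul_comm]

lemma eeaS_add_two (h : 0 < eeaR n μ (j + 1)) :
    eeaS n μ (j + 2) = eeaS n μ j - eeaR n μ j / eeaR n μ (j + 1) * eeaS n μ (j + 1) := by
  rw [eeaS, eea_add_two, if_pos h]

lemma eeaT_add_two (h : 0 < eeaR n μ (j + 1)) :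
    eeaT n μ (j + 2) = eeaT n μ j - eeaR n μ j / eeaR n μ (j + 1) * eeaT n μ (j + 1) := by
  rw [eeaT, eea_add_two, if_pos h]

lemma eea_add_two_of_nonpos (h : ¬0 < eeaR n μ (j + 1)) : eea n μ (j + 2) = (0, 0, 0) := by
  rw [eea_add_two, if_neg h]

lemma eeaR_add_two_of_nonpos (h : ¬0 < eeaR n μ (j + 1)) : eeaR n μ (j + 2) = 0 := by
  rw [eeaR, eea_add_two_of_nonpos h]

lemma eeaS_add_two_of_nonpos (h : ¬0 < eeaR n μ (j + 1)) : eeaS n μ (j + 2) = 0 := by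
  rw [eeaS, eea_add_two_of_nonpos h]

lemma eeaT_add_two_of_nonpos (h : ¬0 < eeaR n μ (j + 1)) : eeaT n μ (j + 2) = 0 := by
  rw [eeaT, eea_add_two_of_nonpos h]

variable (n μ) in
lemma eea_bezout : ∀ j, n * eeaS n μ j + μ * eeaT n μ j = eeaR n μ j
  | 0 => by simp [eeaR, eeaS, eeaT, eea]
  | 1 => by simp [eeaR, eeaS, eeaT, eea]
  | j + 2 => by
    by_cases h : 0 < eeaR n μ (j + 1)
    · rw [eeaR_add_two h, Int.emod_def, eeaS_add_two h, eeaT_add_two h]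
      linear_combination eea_bezout j - eeaR n μ j / eeaR n μ (j + 1) * eea_bezout (j + 1)
    · simp [eeaR_add_two_of_nonpos h, eeaS_add_two_of_nonpos h, eeaT_add_two_of_nonpos h]

lemma dvd_eeaR_sq_add_eeaT_sq (h : n ∣ μ ^ 2 + 1) (j : ℕ) :
    n ∣ eeaR n μ j ^ 2 + eeaT n μ j ^ 2 := by
  rw [← eea_bezout]
  rw [show (n * eeaS n μ j + μ * eeaT n μ j) ^ 2 + eeaT n μ j ^ 2 =
      n * (n * eeaS n μ j ^ 2 + 2 * μ * eeaS n μ j * eeaT n μ j) + eeaT n μ j ^ 2 * (μ ^ 2 + 1) by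
    ring]
  exact dvd_add (dvd_mul_right _ _) (dvd_mul_of_dvd_right h _)

lemma eeaR_nonneg (hn : 0 ≤ n) (hμ : 0 ≤ μ) : ∀ j, 0 ≤ eeaR n μ j
  | 0 => hn
  | 1 => hμ
  | j + 2 => by
    by_cases h : 0 < eeaR n μ (j + 1)
    · rw [eeaR_add_two h]
      exact Int.emod_nonneg _ h.ne'
    · rw [eeaR_add_two_of_nonpos h]

lemma eeaR_pos_of_succ_pos (hn : 0 < n) : ∀ {j}, 0 < eeaR n μ (j + 1) → 0 < eeaR n μ j
  | 0, _ => hn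
  | _ + 1, h => by
    by_contra h'
    rw [eeaR_add_two_of_nonpos h'] at h
    exact h.false

lemma abs_eea_det (hn : 0 < n) :
    ∀ {j}, 0 < eeaR n μ j → |eeaR n μ j * eeaT n μ (j + 1) - eeaR n μ (j + 1) * eeaT n μ j| = n
  | 0, _ => by simp [eeaR, eeaT, eea, hn.le]
  | j + 1, h => by
    convert abs_eea_det hn (eeaR_pos_of_succ_pos hn h) using 1
    rw [eeaR_add_two h, Int.emod_def, eeaT_add_two h, ← abs_neg]
    ring_nf

lemma eeaT_mul_eeaT_succ_nonpos (hn : 0 ≤ n) (hμ : 0 ≤ μ) :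
    ∀ j, eeaT n μ j * eeaT n μ (j + 1) ≤ 0
  | 0 => by simp [eeaT, eea]
  | j + 1 => by
    by_cases h : 0 < eeaR n μ (j + 1)
    · have hq : 0 ≤ eeaR n μ j / eeaR n μ (j + 1) := Int.ediv_nonneg (eeaR_nonneg hn hμ j) h.le
      rw [eeaT_add_two h]
      nlinarith [eeaT_mul_eeaT_succ_nonpos hn hμ j, mul_nonneg hq (sq_nonneg (eeaT n μ (j + 1)))]
    · simp [eeaT_add_two_of_nonpos h]

lemma eeaR_pos_of_le_sq (hn : 0 < n) (hμ : 0 ≤ μ) (h : n ≤ eeaR n μ j ^ 2) : 0 < eeaR n μ j := by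
  refine (eeaR_nonneg hn.le hμ j).lt_of_ne fun h0 => ?_
  rw [← h0] at h
  linarith

lemma eeaR_mul_abs_eeaT_succ_le (hn : 0 < n) (hμ : 0 ≤ μ) (h : 0 < eeaR n μ j) :
    eeaR n μ j * |eeaT n μ (j + 1)| ≤ n := by
  -- `t_j` and `t_{j+1}` have opposite signs, so the two terms of the determinant cannot cancel.
  have hsign : 0 ≤ eeaR n μ j * eeaT n μ (j + 1) * -(eeaR n μ (j + 1) * eeaT n μ j) := by
    have := mul_nonneg (mul_nonneg h.le (eeaR_nonneg hn.le hμ (j + 1)))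
      (neg_nonneg.2 (eeaT_mul_eeaT_succ_nonpos hn.le hμ j))
    linarith
  calc eeaR n μ j * |eeaT n μ (j + 1)| = |eeaR n μ j * eeaT n μ (j + 1)| := by
        rw [abs_mul, abs_of_pos h]
    _ ≤ |eeaR n μ j * eeaT n μ (j + 1) - eeaR n μ (j + 1) * eeaT n μ j| :=
        abs_le_abs_add_of_mul_nonneg hsign
    _ = n := abs_eea_det hn h

lemma eeaT_succ_sq_le (hn : 0 < n) (hμ : 0 ≤ μ) (h : n ≤ eeaR n μ j ^ 2) :
    eeaT n μ (j + 1) ^ 2 ≤ n := by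
  have hr := eeaR_pos_of_le_sq hn hμ h
  refine le_of_mul_le_mul_left ?_ hn
  calc n * eeaT n μ (j + 1) ^ 2 ≤ eeaR n μ j ^ 2 * eeaT n μ (j + 1) ^ 2 :=
        mul_le_mul_of_nonneg_right h (sq_nonneg _)
    _ = (eeaR n μ j * |eeaT n μ (j + 1)|) ^ 2 := by rw [mul_pow, sq_abs]
    _ ≤ n ^ 2 := pow_le_pow_left₀ (by positivity) (eeaR_mul_abs_eeaT_succ_le hn hμ hr) 2
    _ = n * n := sq n

lemma eeaR_sq_add_eeaT_sq_succ_pos (hn : 0 < n) (h : 0 < eeaR n μ j) :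
    0 < eeaR n μ (j + 1) ^ 2 + eeaT n μ (j + 1) ^ 2 := by
  refine (add_nonneg (sq_nonneg _) (sq_nonneg _)).lt_of_ne fun h0 => ?_
  obtain ⟨hr, ht⟩ := (add_eq_zero_iff_of_nonneg (sq_nonneg _) (sq_nonneg _)).1 h0.symm
  have hdet := abs_eea_det hn h
  rw [pow_eq_zero_iff two_ne_zero] at hr ht
  simp only [hr, ht, mul_zero, zero_mul, sub_zero, abs_zero] at hdet
  exact hn.ne hdet

end ExtendedEuclid

theorem cornacchia_sum_of_two_squares_general (n : ℕ) (hn : n.Prime) (μ : ℤ)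
    (hμ1 : 1 < μ) (hμ : (n : ℤ) ∣ μ ^ 2 + 1)
    (m : ℕ)
    (hm : (n : ℤ) ≤ eeaR (n : ℤ) μ m ^ 2)
    (hm1 : eeaR (n : ℤ) μ (m + 1) ^ 2 < (n : ℤ)) :
    eeaR (n : ℤ) μ (m + 1) ^ 2 + eeaT (n : ℤ) μ (m + 1) ^ 2 = (n : ℤ) := by
  have hn0 : (0 : ℤ) < n := by exact_mod_cast hn.pos
  have hμ0 : 0 ≤ μ := zero_le_one.trans hμ1.le
  have ht : eeaT n μ (m + 1) ^ 2 < n := (eeaT_succ_sq_le hn0 hμ0 hm).lt_of_ne fun h =>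
    (Nat.prime_iff_prime_int.1 hn).not_isSquare ⟨_, h.symm.trans (sq _)⟩
  have hpos := eeaR_sq_add_eeaT_sq_succ_pos hn0 (eeaR_pos_of_le_sq hn0 hμ0 hm)
  obtain ⟨c, hc⟩ := dvd_eeaR_sq_add_eeaT_sq hμ (m + 1)
  obtain rfl : c = 1 := by
    have hc0 : 0 < c := pos_of_mul_pos_right (hc ▸ hpos) hn0.le
    have hc2 : c < 2 := lt_of_mul_lt_mul_left (by linarith) hn0.le
    omega
  rw [hc, mul_one]

/-- Correctness of Cornacchia's algorithm in ℤ: for a prime `n` and `1 < μ < n` with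
`μ² ≡ −1 (mod n)`, if `m` is an index with `r_m² ≥ n` and `r_{m+1}² < n`, then
`r_{m+1}² + t_{m+1}² = n`, i.e. the algorithm writes `n` as a sum of two squares. -/
theorem cornacchia_sum_of_two_squares (n : ℕ) (hn : n.Prime) (μ : ℤ)
    (hμ1 : 1 < μ) (hμn : μ < (n : ℤ)) (hμ : (n : ℤ) ∣ μ ^ 2 + 1)
    (m : ℕ)
    (hm : (n : ℤ) ≤ eeaR (n : ℤ) μ m ^ 2)
    (hm1 : eeaR (n : ℤ) μ (m + 1) ^ 2 < (n : ℤ)) :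
    eeaR (n : ℤ) μ (m + 1) ^ 2 + eeaT (n : ℤ) μ (m + 1) ^ 2 = (n : ℤ) :=
  cornacchia_sum_of_two_squares_general n hn μ hμ1 hμ m hm hm1
end

section
/- Let w and z be complex numbers and ψ a real number with 0 ≤ ψ ≤ π/2. If z = 0, or w = 0, or |arg(w/z)| ≥ ψ (where arg takes values in (−π, π]), then |w − z| ≥ sin ψ · max(|w|, |z|). -/
/-! By the law of cosines `‖w - z‖² = ‖w‖² + ‖z‖² - 2‖w‖‖z‖ cos θ`, where `θ = |arg (w / z)|` is
the angle between `w` and `z`. As `ψ ≤ θ ≤ π`, `cos θ ≤ cos ψ`, and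
`‖w‖² + ‖z‖² - 2‖w‖‖z‖ cos ψ` exceeds `sin² ψ ‖z‖²` by `(‖w‖ - ‖z‖ cos ψ)²`, and symmetrically
`sin² ψ ‖w‖²` by `(‖z‖ - ‖w‖ cos ψ)²`. -/

open Real InnerProductGeometry

theorem sq_sin_mul_max_le (a b ψ : ℝ) :
    (sin ψ * max a b) ^ 2 ≤ a ^ 2 + b ^ 2 - 2 * a * b * cos ψ := by
  have hψ := sin_sq_add_cos_sq ψ
  rcases le_total a b with hab | hab
  · rw [max_eq_right hab]
    nlinarith [sq_nonneg (a - b * cos ψ)]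
  · rw [max_eq_left hab]
    nlinarith [sq_nonneg (b - a * cos ψ)]

theorem sin_mul_max_norm_le_norm_sub_of_cos_angle_le {V : Type*}
    [NormedAddCommGroup V] [InnerProductSpace ℝ V] {x y : V} {ψ : ℝ}
    (h : cos (angle x y) ≤ cos ψ) : sin ψ * max ‖x‖ ‖y‖ ≤ ‖x - y‖ := by
  have hsq : (sin ψ * max ‖x‖ ‖y‖) ^ 2 ≤ ‖x - y‖ ^ 2 := calc
    _ ≤ ‖x‖ ^ 2 + ‖y‖ ^ 2 - 2 * ‖x‖ * ‖y‖ * cos ψ := sq_sin_mul_max_le _ _ _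
    _ ≤ ‖x‖ ^ 2 + ‖y‖ ^ 2 - 2 * ‖x‖ * ‖y‖ * cos (angle x y) := by gcongr
    _ = ‖x - y‖ ^ 2 := by
      rw [sq, sq, sq, norm_sub_sq_eq_norm_sq_add_norm_sq_sub_two_mul_norm_mul_norm_mul_cos_angle]
  exact (le_abs_self _).trans (abs_le_of_sq_le_sq hsq (norm_nonneg _))

theorem abs_sub_ge_sin_mul_max_general (w z : ℂ) (ψ : ℝ)
    (hψ0 : 0 ≤ ψ)
    (h : z = 0 ∨ w = 0 ∨ ψ ≤ |Complex.arg (w / z)|) :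
    Real.sin ψ * max ‖w‖ ‖z‖ ≤ ‖w - z‖ := by
  rcases eq_or_ne z 0 with rfl | hz
  · simpa using mul_le_of_le_one_left (norm_nonneg w) (sin_le_one ψ)
  rcases eq_or_ne w 0 with rfl | hw
  · simpa using mul_le_of_le_one_left (norm_nonneg z) (sin_le_one ψ)
  have hψ : ψ ≤ angle w z := by
    simpa [Complex.angle_eq_abs_arg hw hz, hz, hw] using h
  exact sin_mul_max_norm_le_norm_sub_of_cos_angle_le
    (cos_le_cos_of_nonneg_of_le_pi hψ0 (angle_le_pi w z) hψ)

/-- Key inequality of Lemma 4 ('Use of good j's'): if `z = 0`, or `w = 0`, or the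
argument of `w/z` has absolute value at least `ψ` (with `0 ≤ ψ ≤ π/2`), then
`|w − z| ≥ sin ψ · max(|w|, |z|)`. -/
theorem abs_sub_ge_sin_mul_max (w z : ℂ) (ψ : ℝ)
    (hψ0 : 0 ≤ ψ) (hψ2 : ψ ≤ Real.pi / 2)
    (h : z = 0 ∨ w = 0 ∨ ψ ≤ |Complex.arg (w / z)|) :
    Real.sin ψ * max ‖w‖ ‖z‖ ≤ ‖w - z‖ :=
  abs_sub_ge_sin_mul_max_general w z ψ hψ0 h
end

section
/- Let p be a point of the closed unit square in the complex plane with vertex set V = {0, 1, i, 1+i}, and suppose p is not one of the four vertices. Then there exist distinct vertices v₁, v₂ ∈ V such that |v₁ − p| ≤ 1/√2 and |arg((v₁ − p)/(v₂ − p))| ≥ 2.458 (where arg takes values in (−π, π]); in particular the angle subtended at p by v₁ and v₂ is at least 2.458 > 2·arctan 2. -/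
/-!
The reflections `z ↦ 1 - z̄`, `z ↦ z̄ + i` and `z ↦ i z̄` permute the vertices of the square and
preserve distances and unsigned angles, so it suffices to treat `p` in the triangle
`0 ≤ Im p ≤ Re p ≤ 1/2`; there `v₁ = 0` lies within `1/√2`. Close to the real axis
(`Im p ≤ 0.3553 Re p`) the angle `∠ 0 p 1` is wide enough, otherwise `∠ 0 p (1 + i)` is.
Both reduce to quadratic inequalities through the cone criterion: `∠ z 0 w ≥ 2.458` as soon as
`1.228 |Im (z w̄)| ≤ -Re (z w̄)`, which holds because `cos 2.458 ≥ -0.7754`.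
-/

open Real

namespace Real

lemma neg_le_cos_2458 : -(3877 / 5000 : ℝ) ≤ cos 2.458 := by
  set s : ℝ := (π - 2.458) / 2 with hs
  have hs₀ : 0.341796 ≤ s := by rw [hs]; linarith [pi_gt_d6]
  have hs₁ : s ≤ 1 := by rw [hs]; linarith [pi_le_four]
  have hsin : 0.33512 ≤ sin s := calc
    (0.33512 : ℝ) ≤ s - s ^ 3 / 6 := by
      nlinarith [mul_nonneg (sub_nonneg.2 hs₀) (sub_nonneg.2 hs₁)]
    _ ≤ sin s := sin_ge_sub_cube (by linarith)
  have hcos : cos 2.458 = 2 * sin s ^ 2 - 1 := by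
    rw [show (2.458 : ℝ) = π - 2 * s by rw [hs]; ring, cos_pi_sub, cos_two_mul, cos_sq']
    ring
  rw [hcos]
  nlinarith

lemma two_mul_arctan_two_lt : 2 * arctan 2 < 2.458 := by
  have htan : tan 0.35 < 2⁻¹ := by
    have hcos : 0.93 ≤ cos 0.35 := by nlinarith [one_sub_sq_div_two_le_cos (x := 0.35)]
    rw [tan_eq_sin_div_cos, div_lt_iff₀ (by linarith)]
    linarith [sin_lt (x := 0.35) (by norm_num)]
  have harctan : 0.35 < arctan 2⁻¹ := by
    rw [← arctan_tan (x := 0.35) (by linarith [pi_gt_three]) (by linarith [pi_gt_three])]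
    exact arctan_strictMono htan
  rw [arctan_inv_of_pos two_pos] at harctan
  linarith [pi_lt_d2]

end Real

namespace Complex

open ComplexConjugate

lemma abs_arg_conj (x : ℂ) : |arg (conj x)| = |arg x| := by
  rw [arg_conj]
  split_ifs with h <;> simp [h]

lemma arg_div_eq_arg_mul_conj (z w : ℂ) : arg (z / w) = arg (z * conj w) := by
  rcases eq_or_ne w 0 with rfl | hw
  · simp
  rw [div_eq_mul_inv, inv_def, ← mul_assoc, arg_mul_real (inv_pos.2 (normSq_pos.2 hw))]

lemma le_abs_arg_of_re_le_cos_mul_norm {w : ℂ} {θ : ℝ} (hθ₀ : 0 ≤ θ) (hθπ : θ ≤ π) (hw : w ≠ 0)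
    (h : w.re ≤ Real.cos θ * ‖w‖) : θ ≤ |arg w| := by
  rwa [← strictAntiOn_cos.le_iff_ge ⟨abs_nonneg _, abs_arg_le_pi w⟩ ⟨hθ₀, hθπ⟩, cos_abs,
    cos_arg hw, div_le_iff₀ (norm_pos_iff.2 hw)]

lemma re_le_neg_mul_norm_of_mul_abs_im_le {w : ℂ} {c k : ℝ} (hk : 0 < k)
    (hck : c ^ 2 * (k ^ 2 + 1) ≤ k ^ 2) (h : k * |w.im| ≤ -w.re) : w.re ≤ -c * ‖w‖ := by
  have hre : 0 ≤ -w.re := (mul_nonneg hk.le (abs_nonneg _)).trans h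
  have him : k ^ 2 * w.im ^ 2 ≤ w.re ^ 2 := by
    rw [← sq_abs w.im, ← mul_pow, ← neg_sq w.re]
    exact pow_le_pow_left₀ (by positivity) h 2
  have hnorm : ‖w‖ ^ 2 = w.re ^ 2 + w.im ^ 2 := by
    rw [Complex.sq_norm, normSq_apply]
    ring
  have hsq : (c * ‖w‖) ^ 2 ≤ w.re ^ 2 := by
    rw [mul_pow, hnorm]
    refine le_of_mul_le_mul_left ?_ (pow_pos hk 2)
    nlinarith [sq_nonneg c, sq_nonneg w.re]
  nlinarith [norm_nonneg w]

lemma le_abs_arg_div_of_mul_abs_im_le {z w : ℂ} (hz : z ≠ 0) (hw : w ≠ 0)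
    (h : 1.228 * |(z * conj w).im| ≤ -(z * conj w).re) : (2.458 : ℝ) ≤ |arg (z / w)| := by
  rw [arg_div_eq_arg_mul_conj]
  refine le_abs_arg_of_re_le_cos_mul_norm (by norm_num) (by linarith [pi_gt_three])
    (mul_ne_zero hz ((map_ne_zero _).2 hw)) ?_
  calc (z * conj w).re ≤ -(3877 / 5000) * ‖z * conj w‖ :=
        re_le_neg_mul_norm_of_mul_abs_im_le (by norm_num) (by norm_num) h
    _ ≤ Real.cos 2.458 * ‖z * conj w‖ :=
        mul_le_mul_of_nonneg_right neg_le_cos_2458 (norm_nonneg _)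

lemma norm_le_inv_sqrt_two {z : ℂ} (hre : |z.re| ≤ 1 / 2) (him : |z.im| ≤ 1 / 2) :
    ‖z‖ ≤ 1 / √2 := calc
  ‖z‖ ≤ √2 * max |z.re| |z.im| := norm_le_sqrt_two_mul_max z
  _ ≤ √2 * (1 / 2) := by gcongr; exact max_le hre him
  _ = 1 / √2 := by field_simp; exact Real.sq_sqrt zero_le_two

def HasWideAngle (V : Set ℂ) (r θ : ℝ) (p : ℂ) : Prop :=
  ∃ v₁ ∈ V, ∃ v₂ ∈ V, v₁ ≠ v₂ ∧ ‖v₁ - p‖ ≤ r ∧ θ ≤ |arg ((v₁ - p) / (v₂ - p))|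

/-- For `‖u‖ = 1` and `c + u * conj c = 0` this is the reflection in a line. -/
def conjAffine (u c z : ℂ) : ℂ := c + u * conj z

section conjAffine

variable {u c : ℂ}

lemma conjAffine_sub_conjAffine (z w : ℂ) :
    conjAffine u c z - conjAffine u c w = u * conj (z - w) := by
  simp only [conjAffine, map_sub]
  ring

lemma conjAffine_conjAffine (hu : ‖u‖ = 1) (hc : c + u * conj c = 0) (z : ℂ) :
    conjAffine u c (conjAffine u c z) = z := by
  have hu' : u * conj u = 1 := by rw [mul_conj, normSq_eq_norm_sq, hu]; simp
  simp only [conjAffine, map_add, map_mul, conj_conj]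
  linear_combination hc + z * hu'

variable {V : Set ℂ}

lemma conjAffine_notMem (hu : ‖u‖ = 1) (hc : c + u * conj c = 0)
    (hV : Set.MapsTo (conjAffine u c) V V) {p : ℂ} (hp : p ∉ V) : conjAffine u c p ∉ V :=
  fun h => hp (conjAffine_conjAffine hu hc p ▸ hV h)

lemma HasWideAngle.of_conjAffine (hu : ‖u‖ = 1) (hc : c + u * conj c = 0)
    (hV : Set.MapsTo (conjAffine u c) V V) {r θ : ℝ} {p : ℂ}
    (h : HasWideAngle V r θ (conjAffine u c p)) : HasWideAngle V r θ p := by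
  obtain ⟨v₁, hv₁, v₂, hv₂, hne, hr, hθ⟩ := h
  have hsub (v : ℂ) : v - conjAffine u c p = u * conj (conjAffine u c v - p) := by
    rw [← conjAffine_sub_conjAffine, conjAffine_conjAffine hu hc]
  have hu₀ : u ≠ 0 := norm_ne_zero_iff.1 (hu ▸ one_ne_zero)
  refine ⟨_, hV hv₁, _, hV hv₂, fun h => hne ?_, ?_, ?_⟩
  · rw [← conjAffine_conjAffine hu hc v₁, h, conjAffine_conjAffine hu hc]
  · rwa [hsub, norm_mul, hu, one_mul, norm_conj] at hr
  · rwa [hsub, hsub, mul_div_mul_left _ _ hu₀, ← map_div₀, abs_arg_conj] at hθ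

end conjAffine

end Complex

open Complex ComplexConjugate

def squareVertices : Set ℂ := {0, 1, I, 1 + I}

lemma mapsTo_one_sub_conj : Set.MapsTo (conjAffine (-1) 1) squareVertices squareVertices := by
  simp only [Set.MapsTo, squareVertices, Set.mem_insert_iff, Set.mem_singleton_iff]
  rintro v (rfl | rfl | rfl | rfl) <;> simp [conjAffine, Complex.ext_iff]

lemma mapsTo_I_add_conj : Set.MapsTo (conjAffine 1 I) squareVertices squareVertices := by
  simp only [Set.MapsTo, squareVertices, Set.mem_insert_iff, Set.mem_singleton_iff]
  rintro v (rfl | rfl | rfl | rfl) <;> simp [conjAffine, Complex.ext_iff]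

lemma mapsTo_I_mul_conj : Set.MapsTo (conjAffine I 0) squareVertices squareVertices := by
  simp only [Set.MapsTo, squareVertices, Set.mem_insert_iff, Set.mem_singleton_iff]
  rintro v (rfl | rfl | rfl | rfl) <;> simp [conjAffine, Complex.ext_iff]

/-- The threshold `0.3553` between the two cases is chosen so that both cone criteria hold at
their common worst point `p = (1 + 0.3553 i) / 2`. -/
lemma hasWideAngle_of_im_le_re {p : ℂ} (hp : p ∉ squareVertices) (him : 0 ≤ p.im)
    (hle : p.im ≤ p.re) (hre : p.re ≤ 1 / 2) : HasWideAngle squareVertices (1 / √2) 2.458 p := by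
  have hre₀ : 0 < p.re := by
    refine (him.trans hle).lt_of_ne fun h => hp ?_
    rw [show p = 0 from Complex.ext h.symm (le_antisymm (hle.trans_eq h.symm) him)]
    simp [squareVertices]
  have hnorm : ‖0 - p‖ ≤ 1 / √2 := by
    refine norm_le_inv_sqrt_two ?_ ?_ <;> rw [zero_sub]
    · rw [neg_re, abs_neg, abs_of_pos hre₀]; exact hre
    · rw [neg_im, abs_neg, abs_of_nonneg him]; linarith
  have hp₀ : 0 - p ≠ 0 := by
    rw [zero_sub, neg_ne_zero]
    rintro rfl
    simp at hre₀
  rcases le_total p.im (0.3553 * p.re) with hedge | hdiag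
  · have hp₁ : 1 - p ≠ 0 := sub_ne_zero.2 fun h => by norm_num [← h] at hre
    refine ⟨0, by simp [squareVertices], 1, by simp [squareVertices], zero_ne_one, hnorm,
      le_abs_arg_div_of_mul_abs_im_le hp₀ hp₁ ?_⟩
    have hdot : ((0 - p) * conj (1 - p)).re = -(p.re * (1 - p.re) - p.im ^ 2) := by
      simp only [mul_re, conj_re, conj_im, sub_re, sub_im, zero_re, zero_im, one_re, one_im]
      ring
    have hcross : ((0 - p) * conj (1 - p)).im = -p.im := by
      simp only [mul_im, conj_re, conj_im, sub_re, sub_im, zero_re, zero_im, one_re, one_im]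
      ring
    rw [hdot, hcross, abs_neg, abs_of_nonneg him, neg_neg]
    nlinarith [mul_le_mul hedge hedge him (by linarith), mul_nonneg hre₀.le (sub_nonneg.2 hre)]
  · have hp₁ : 1 + I - p ≠ 0 := sub_ne_zero.2 fun h => by norm_num [← h] at hre
    refine ⟨0, by simp [squareVertices], 1 + I, by simp [squareVertices],
      by simp [Complex.ext_iff], hnorm, le_abs_arg_div_of_mul_abs_im_le hp₀ hp₁ ?_⟩
    have hdot : ((0 - p) * conj (1 + I - p)).re = -(p.re * (1 - p.re) + p.im * (1 - p.im)) := by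
      simp only [mul_re, conj_re, conj_im, sub_re, sub_im, add_re, add_im, zero_re, zero_im,
        one_re, one_im, I_re, I_im]
      ring
    have hcross : ((0 - p) * conj (1 + I - p)).im = p.re - p.im := by
      simp only [mul_im, conj_re, conj_im, sub_re, sub_im, add_re, add_im, zero_re, zero_im,
        one_re, one_im, I_re, I_im]
      ring
    rw [hdot, hcross, abs_of_nonneg (sub_nonneg.2 hle), neg_neg]
    nlinarith [mul_nonneg (sub_nonneg.2 hdiag) (sub_nonneg.2 hre),
      mul_nonneg hre₀.le (sub_nonneg.2 hre)]

lemma hasWideAngle_of_re_le_half_of_im_le_half {p : ℂ} (hp : p ∉ squareVertices)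
    (h₁ : 0 ≤ p.re) (h₂ : p.re ≤ 1 / 2) (h₃ : 0 ≤ p.im) (h₄ : p.im ≤ 1 / 2) :
    HasWideAngle squareVertices (1 / √2) 2.458 p := by
  rcases le_total p.im p.re with hle | hle
  · exact hasWideAngle_of_im_le_re hp h₃ hle h₂
  have hre : (conjAffine I 0 p).re = p.im := by simp [conjAffine]
  have him : (conjAffine I 0 p).im = p.re := by simp [conjAffine]
  exact .of_conjAffine (by simp) (by simp) mapsTo_I_mul_conj <| hasWideAngle_of_im_le_re
    (conjAffine_notMem (by simp) (by simp) mapsTo_I_mul_conj hp)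
    (by linarith) (by linarith) (by linarith)

lemma hasWideAngle_of_re_le_half {p : ℂ} (hp : p ∉ squareVertices)
    (h₁ : 0 ≤ p.re) (h₂ : p.re ≤ 1 / 2) (h₃ : 0 ≤ p.im) (h₄ : p.im ≤ 1) :
    HasWideAngle squareVertices (1 / √2) 2.458 p := by
  rcases le_total p.im (1 / 2) with hhalf | hhalf
  · exact hasWideAngle_of_re_le_half_of_im_le_half hp h₁ h₂ h₃ hhalf
  have hre : (conjAffine 1 I p).re = p.re := by simp [conjAffine]
  have him : (conjAffine 1 I p).im = 1 - p.im := by simp [conjAffine, sub_eq_add_neg]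
  exact .of_conjAffine (by simp) (by simp) mapsTo_I_add_conj <|
    hasWideAngle_of_re_le_half_of_im_le_half
      (conjAffine_notMem (by simp) (by simp) mapsTo_I_add_conj hp)
      (by linarith) (by linarith) (by linarith) (by linarith)

lemma hasWideAngle_of_mem_square {p : ℂ} (hp : p ∉ squareVertices)
    (h₁ : 0 ≤ p.re) (h₂ : p.re ≤ 1) (h₃ : 0 ≤ p.im) (h₄ : p.im ≤ 1) :
    HasWideAngle squareVertices (1 / √2) 2.458 p := by
  rcases le_total p.re (1 / 2) with hhalf | hhalf
  · exact hasWideAngle_of_re_le_half hp h₁ hhalf h₃ h₄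
  have hre : (conjAffine (-1) 1 p).re = 1 - p.re := by simp [conjAffine, sub_eq_add_neg]
  have him : (conjAffine (-1) 1 p).im = p.im := by simp [conjAffine]
  exact .of_conjAffine (by simp) (by simp) mapsTo_one_sub_conj <|
    hasWideAngle_of_re_le_half (conjAffine_notMem (by simp) (by simp) mapsTo_one_sub_conj hp)
      (by linarith) (by linarith) (by linarith) (by linarith)

/-- Lemma 3 of the paper (a geometric property of squares): for every point `p` of the
closed unit square with vertices `0, 1, i, 1+i` that is not a vertex, there are two
distinct vertices `v₁, v₂` with `|v₁ − p| ≤ 1/√2` such that the angle `∠ v₁ p v₂` is at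
least `2.458`; moreover `2.458 > 2·arctan 2`. -/
theorem unit_square_angle_property (p : ℂ)
    (h1 : 0 ≤ p.re) (h2 : p.re ≤ 1) (h3 : 0 ≤ p.im) (h4 : p.im ≤ 1)
    (hp : p ∉ ({0, 1, Complex.I, 1 + Complex.I} : Set ℂ)) :
    (∃ v₁ ∈ ({0, 1, Complex.I, 1 + Complex.I} : Set ℂ),
      ∃ v₂ ∈ ({0, 1, Complex.I, 1 + Complex.I} : Set ℂ),
        v₁ ≠ v₂ ∧
        ‖v₁ - p‖ ≤ 1 / Real.sqrt 2 ∧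
        (2.458 : ℝ) ≤ |Complex.arg ((v₁ - p) / (v₂ - p))|) ∧
    2 * Real.arctan 2 < (2.458 : ℝ) :=
  ⟨hasWideAngle_of_mem_square hp h1 h2 h3 h4, two_mul_arctan_two_lt⟩
end

section
/- Let θ be a real number with sin(θ/2) ≠ 0, and set u = cos(θ/2)/sin(θ/2). If 2u³ − 3u² − 2u + 1 = 0, then θ/π is irrational. -/
/-!
If `θ = qπ`, then `ζ = e^{iθ}` is a root of unity and `u = cot (θ/2) = i (ζ + 1) / (ζ - 1)`,
so `ℚ(u, i) = ℚ(ζ, i)` is the cyclotomic field `ℚ(ζ_m)` with `m = lcm (ord ζ) 4`. The cubic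
has no rational root, so `u` has degree `3`; as `i` has degree `2`, the degree `φ(m)` of
`ℚ(u, i)` is a multiple of `3` and at most `6`. But `4 ∣ m` forces `φ(m) = 2` or `4 ∣ φ(m)`.
-/

open Polynomial IntermediateField Module

theorem Nat.four_dvd_totient_of_four_dvd {m : ℕ} (hm : 4 ∣ m) (h4 : m ≠ 4) :
    4 ∣ m.totient := by
  obtain ⟨k, rfl⟩ := hm
  rcases Nat.lt_or_ge 1 k with hk | hk
  · have hφ : (2 * (2 * k)).totient = 2 * (2 * k).totient :=
      Nat.totient_mul_of_prime_of_dvd Nat.prime_two (dvd_mul_right 2 k)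
    obtain ⟨j, hj⟩ := Nat.totient_even (show 2 < 2 * k by omega)
    rw [show 4 * k = 2 * (2 * k) by ring, hφ, hj]
    exact ⟨j, by ring⟩
  · interval_cases k <;> simp_all

section CharZero

variable {K : Type*} [Field K] [CharZero K]

theorem IsPrimitiveRoot.finrank_adjoin_rat {ζ : K} {n : ℕ} (hζ : IsPrimitiveRoot ζ n)
    (hn : 0 < n) : finrank ℚ ℚ⟮ζ⟯ = n.totient := by
  rw [adjoin.finrank (hζ.isIntegral hn).tower_top, ← cyclotomic_eq_minpoly_rat hζ hn,
    natDegree_cyclotomic]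

theorem IsPrimitiveRoot.mem_adjoin_of_pow_eq_one {w y : K} {m : ℕ} [NeZero m]
    (hw : IsPrimitiveRoot w m) (hy : y ^ m = 1) : y ∈ ℚ⟮w⟯ := by
  obtain ⟨k, -, rfl⟩ := hw.eq_pow_of_pow_eq_one hy
  exact pow_mem (mem_adjoin_simple_self ℚ w) k

theorem exists_isPrimitiveRoot_adjoin_eq_sup {i x z : K} (hi : IsPrimitiveRoot i 4)
    (hz : IsOfFinOrder z) (hxz : x * (z - 1) = i * (z + 1)) :
    ∃ w : K, IsPrimitiveRoot w ((orderOf z).lcm 4) ∧ ℚ⟮w⟯ = ℚ⟮x⟯ ⊔ ℚ⟮i⟯ := by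
  have hi0 : i ≠ 0 := hi.ne_zero (by norm_num)
  have hz1 : z - 1 ≠ 0 := by
    intro h
    have : i * 2 = 0 := by linear_combination -hxz + (x - i) * h
    simp [hi0] at this
  have hxi : x - i ≠ 0 := by
    intro h
    have : i * 2 = 0 := by linear_combination -hxz + (z - 1) * h
    simp [hi0] at this
  have hxE : x ∈ ℚ⟮x⟯ ⊔ ℚ⟮i⟯ :=
    le_sup_left (α := IntermediateField ℚ K) (mem_adjoin_simple_self ℚ x)
  have hiE : i ∈ ℚ⟮x⟯ ⊔ ℚ⟮i⟯ :=
    le_sup_right (α := IntermediateField ℚ K) (mem_adjoin_simple_self ℚ i)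
  have hzE : z ∈ ℚ⟮x⟯ ⊔ ℚ⟮i⟯ := by
    rw [show z = (x + i) / (x - i) by rw [eq_div_iff hxi]; linear_combination hxz]
    exact div_mem (add_mem hxE hiE) (sub_mem hxE hiE)
  have hzn : orderOf z ≠ 0 := hz.orderOf_pos.ne'
  have : NeZero ((orderOf z).lcm 4) := ⟨Nat.lcm_ne_zero hzn four_ne_zero⟩
  obtain ⟨w, hw, hwE⟩ : ∃ w, IsPrimitiveRoot w ((orderOf z).lcm 4) ∧ w ∈ ℚ⟮x⟯ ⊔ ℚ⟮i⟯ :=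
    ⟨_, (IsPrimitiveRoot.orderOf z).pow_mul_pow_lcm hi hzn four_ne_zero,
      mul_mem (pow_mem hzE _) (pow_mem hiE _)⟩
  have hzw := hw.mem_adjoin_of_pow_eq_one (orderOf_dvd_iff_pow_eq_one.1 (Nat.dvd_lcm_left _ _))
  have hiw := hw.mem_adjoin_of_pow_eq_one ((hi.pow_eq_one_iff_dvd _).2 (Nat.dvd_lcm_right _ _))
  have hxw : x ∈ ℚ⟮w⟯ := by
    rw [show x = i * (z + 1) / (z - 1) by rw [eq_div_iff hz1, hxz]]
    exact div_mem (mul_mem hiw (add_mem hzw (one_mem _))) (sub_mem hzw (one_mem _))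
  exact ⟨w, hw, le_antisymm (adjoin_simple_le_iff.2 hwE)
    (sup_le (adjoin_simple_le_iff.2 hxw) (adjoin_simple_le_iff.2 hiw))⟩

theorem finrank_adjoin_ne_three_of_isOfFinOrder {i x z : K} (hi : IsPrimitiveRoot i 4)
    (hz : IsOfFinOrder z) (hxz : x * (z - 1) = i * (z + 1)) : finrank ℚ ℚ⟮x⟯ ≠ 3 := by
  intro hx
  obtain ⟨w, hw, hwE⟩ := exists_isPrimitiveRoot_adjoin_eq_sup hi hz hxz
  set m := (orderOf z).lcm 4
  have hm : 0 < m := Nat.lcm_pos hz.orderOf_pos four_pos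
  have hφ : finrank ℚ ↥(ℚ⟮x⟯ ⊔ ℚ⟮i⟯ : IntermediateField ℚ K) = m.totient := by
    rw [← hwE, hw.finrank_adjoin_rat hm]
  have h3 : 3 ∣ m.totient := hx ▸ hφ ▸ finrank_dvd_of_le_right le_sup_left
  have h6 : m.totient ≤ 6 :=
    calc m.totient ≤ finrank ℚ ℚ⟮x⟯ * finrank ℚ ℚ⟮i⟯ := hφ ▸ finrank_sup_le ℚ⟮x⟯ ℚ⟮i⟯
      _ = 6 := by rw [hx, hi.finrank_adjoin_rat four_pos]; decide
  have hpos : 0 < m.totient := Nat.totient_pos.2 hm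
  by_cases h4 : m = 4
  · rw [h4] at h3
    exact absurd h3 (by decide)
  · have : 4 ∣ m.totient := Nat.four_dvd_totient_of_four_dvd (Nat.dvd_lcm_right _ _) h4
    omega

end CharZero

noncomputable def cubic : ℚ[X] := X ^ 3 - C (3 / 2) * X ^ 2 - X + C (1 / 2)

theorem cubic_monic : cubic.Monic := by
  unfold cubic; monicity!

theorem cubic_natDegree : cubic.natDegree = 3 := by
  unfold cubic; compute_degree!

theorem aeval_cubic {K : Type*} [Field K] [CharZero K] (x : K) :
    aeval x cubic = (2 * x ^ 3 - 3 * x ^ 2 - 2 * x + 1) / 2 := by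
  simp only [cubic, map_add, map_sub, map_mul, map_pow, aeval_X, aeval_C, eq_ratCast]
  push_cast
  ring

/-- `2r` would be a root of the monic integer cubic `X³ - 3X² - 4X + 4`, hence an integer
dividing `4`. -/
theorem eval_cubic_ne_zero (r : ℚ) : cubic.eval r ≠ 0 := by
  intro hr
  simp only [cubic, eval_add, eval_sub, eval_mul, eval_pow, eval_X, eval_C] at hr
  have hmonic : (X ^ 3 - 3 * X ^ 2 - 4 * X + 4 : ℤ[X]).Monic := by monicity!
  obtain ⟨k, hk, hdvd⟩ := exists_integer_of_is_root_of_monic hmonic (r := 2 * r)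
    (by simp only [map_add, map_sub, map_mul, map_pow, aeval_X, map_ofNat]
        linear_combination 8 * hr)
  rw [algebraMap_int_eq, eq_intCast] at hk
  have hk4 : k ∣ 4 := by simpa using hdvd
  have hle : k ≤ 4 := Int.le_of_dvd (by norm_num) hk4
  have hge : -4 ≤ k := by linarith [Int.le_of_dvd (by norm_num) (Int.neg_dvd.2 hk4)]
  have hroot : (k : ℚ) ^ 3 - 3 * k ^ 2 - 4 * k + 4 = 0 := by
    rw [← hk]
    linear_combination 8 * hr
  interval_cases k <;> norm_num at hroot

theorem irreducible_cubic : Irreducible cubic := by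
  rw [cubic_monic.irreducible_iff_roots_eq_zero_of_degree_le_three (by simp [cubic_natDegree])
    (by simp [cubic_natDegree]), Multiset.eq_zero_iff_forall_notMem]
  intro r hr
  rw [mem_roots cubic_monic.ne_zero, IsRoot.def] at hr
  exact eval_cubic_ne_zero r hr

theorem finrank_adjoin_of_cubic_eq_zero {K : Type*} [Field K] [CharZero K] {x : K}
    (hx : 2 * x ^ 3 - 3 * x ^ 2 - 2 * x + 1 = 0) : finrank ℚ ℚ⟮x⟯ = 3 := by
  have hroot : aeval x cubic = 0 := by rw [aeval_cubic, hx, zero_div]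
  rw [adjoin.finrank ⟨cubic, cubic_monic, hroot⟩,
    ← minpoly.eq_of_irreducible_of_monic irreducible_cubic hroot cubic_monic, cubic_natDegree]

theorem Complex.cos_mul_exp_two_mul_sub_one (x : ℂ) :
    cos x * (exp (2 * x * I) - 1) = I * sin x * (exp (2 * x * I) + 1) := by
  have hsq : exp (2 * x * I) = exp (x * I) ^ 2 := by rw [← exp_nat_mul]; ring_nf
  have hinv : exp (-x * I) = (exp (x * I))⁻¹ := by rw [← exp_neg]; ring_nf
  rw [cos, sin, hsq, hinv]
  field_simp
  linear_combination (exp (x * I) ^ 4 - 1) * I_sq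

/-- If `cot(θ/2)` is a root of `2u³ − 3u² − 2u + 1`, then `θ/π` is irrational. -/
theorem theta_div_pi_irrational (θ : ℝ) (hs : Real.sin (θ / 2) ≠ 0)
    (u : ℝ) (hu : u = Real.cos (θ / 2) / Real.sin (θ / 2))
    (hroot : 2 * u ^ 3 - 3 * u ^ 2 - 2 * u + 1 = 0) :
    Irrational (θ / Real.pi) := by
  rintro ⟨q, hq⟩
  have hθ : θ = q * Real.pi := by rw [hq, div_mul_cancel₀ _ Real.pi_ne_zero]
  have hz : IsOfFinOrder (Complex.exp (θ * Complex.I)) := isOfFinOrder_iff_pow_eq_one.2 ⟨2 * q.den, by positivity, by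
    rw [hθ]; push_cast; exact Complex.exp_rat_mul_pi_mul_I_pow_two_mul_den q⟩
  set z := Complex.exp (θ * Complex.I)
  have hcot : (u : ℂ) * (z - 1) = Complex.I * (z + 1) := by
    have hs' : Complex.sin (θ / 2) ≠ 0 := by exact_mod_cast hs
    have hu' : (u : ℂ) = Complex.cos (θ / 2) / Complex.sin (θ / 2) := by rw [hu]; push_cast; rfl
    have h := Complex.cos_mul_exp_two_mul_sub_one (θ / 2)
    rw [show 2 * ((θ : ℂ) / 2) = θ by ring] at h
    rw [hu', div_mul_eq_mul_div, div_eq_iff hs', h]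
    ring
  exact finrank_adjoin_ne_three_of_isOfFinOrder Complex.isPrimitiveRoot_I hz hcot
    (finrank_adjoin_of_cubic_eq_zero (by exact_mod_cast hroot))
end

section
/- The polynomial 2X³ − 3X² − 2X + 1 with rational coefficients is irreducible over ℚ, and the Galois group of its splitting field over ℚ is not commutative. -/
/-!
A rational root `n / d` in lowest terms would give a zero of the form
`2n³ − 3n²d − 2nd² + d³` with `n, d` coprime, but modulo 3 this form vanishes only at `(0, 0)`.

An abelian group acting faithfully and transitively acts simply transitively, so an abelian
Galois group of an irreducible cubic has order 3. Each automorphism then has odd order and maps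
the square root `δ = a²(x − y)(x − z)(y − z)` of the discriminant to `±δ`, hence fixes it; so
`δ ∈ ℚ` and the discriminant `316` would be a rational square.
-/

open Polynomial

theorem MulAction.natCard_eq_of_isPretransitive_of_commute {G X : Type*} [Group G]
    [MulAction G X] [FaithfulSMul G X] [IsPretransitive G X] [Nonempty X]
    (hcomm : ∀ g h : G, g * h = h * g) :
    Nat.card G = Nat.card X := by
  obtain ⟨x⟩ := ‹Nonempty X›
  refine Nat.card_eq_of_bijective (· • x) ⟨fun g h hgh => ?_, fun y => exists_smul_eq G x y⟩
  refine eq_of_smul_eq_smul (α := X) fun y => ?_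
  obtain ⟨k, rfl⟩ := exists_smul_eq G x y
  rw [smul_smul, smul_smul, hcomm g k, hcomm h k, mul_smul, mul_smul,
    show g • x = h • x from hgh]

theorem AlgEquiv.apply_eq_self_of_odd_orderOf {F E : Type*} [Field F] [Field E] [Algebra F E]
    {σ : E ≃ₐ[F] E} (hσ : Odd (orderOf σ)) {δ : E} (hδ : σ (δ ^ 2) = δ ^ 2) : σ δ = δ := by
  rw [map_pow, sq_eq_sq_iff_eq_or_eq_neg] at hδ
  refine hδ.elim id fun hneg => ?_
  have hpow (n : ℕ) : (σ ^ n) δ = (-1) ^ n * δ := by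
    induction n with
    | zero => simp
    | succ n ih =>
      rw [pow_succ', AlgEquiv.mul_apply, ih, map_mul, map_pow, map_neg, map_one, hneg]
      ring
  have hself := hpow (orderOf σ)
  rw [pow_orderOf_eq_one, hσ.neg_one_pow, AlgEquiv.one_apply] at hself
  rw [hneg]
  linear_combination -hself

theorem Polynomial.Gal.natCard_eq_natDegree_of_commute {F : Type*} [Field F] {p : F[X]}
    (hirr : Irreducible p) (hsep : p.Separable) (hcomm : ∀ σ τ : p.Gal, σ * τ = τ * σ) :
    Nat.card p.Gal = p.natDegree := by
  have hsplits := SplittingField.splits p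
  have : Fact ((p.map (algebraMap F p.SplittingField)).Splits) := ⟨hsplits⟩
  -- `rootSet p p.SplittingField` also carries `galActionAux`; pin down the action used below.
  let := galAction p p.SplittingField
  have := galAction_isPretransitive p p.SplittingField hirr
  have : FaithfulSMul p.Gal (p.rootSet p.SplittingField) :=
    ⟨fun h => galActionHom_injective p _ (Equiv.ext h)⟩
  have hroots : Nat.card (p.rootSet p.SplittingField) = p.natDegree := by
    rw [Nat.card_eq_fintype_card, card_rootSet_eq_natDegree hsep hsplits]
  have : Nonempty (p.rootSet p.SplittingField) :=
    (Nat.card_pos_iff.mp (hroots ▸ hirr.natDegree_pos)).1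
  rw [MulAction.natCard_eq_of_isPretransitive_of_commute (X := p.rootSet p.SplittingField) hcomm,
    hroots]

namespace Cubic

variable {F : Type*} [Field F] {P : Cubic F}

theorem isSquare_discr_of_odd_natCard_gal (ha : P.a ≠ 0) (hsep : P.toPoly.Separable)
    (hodd : Odd (Nat.card P.toPoly.Gal)) : IsSquare P.discr := by
  set K := P.toPoly.SplittingField
  have : IsGalois F K := IsGalois.of_separable_splitting_field hsep
  obtain ⟨x, y, z, h3⟩ :=
    (splits_iff_roots_eq_three (φ := algebraMap F K) ha).mp (SplittingField.splits P.toPoly)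
  set δ := algebraMap F K P.a * algebraMap F K P.a * (x - y) * (x - z) * (y - z)
  have hδ : algebraMap F K P.discr = δ ^ 2 := discr_eq_prod_three_roots ha h3
  obtain ⟨r, hr⟩ : δ ∈ Set.range (algebraMap F K) := by
    refine (IsGalois.mem_range_algebraMap_iff_fixed δ).mpr fun σ =>
      σ.apply_eq_self_of_odd_orderOf (hodd.of_dvd_nat (orderOf_dvd_natCard σ)) ?_
    rw [← hδ, σ.commutes]
  exact ⟨r, (algebraMap F K).injective (by rw [hδ, ← hr, map_mul, sq])⟩

theorem isSquare_discr_of_commute (ha : P.a ≠ 0) (hirr : Irreducible P.toPoly)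
    (hsep : P.toPoly.Separable) (hcomm : ∀ σ τ : P.toPoly.Gal, σ * τ = τ * σ) :
    IsSquare P.discr := by
  refine isSquare_discr_of_odd_natCard_gal ha hsep ?_
  rw [Gal.natCard_eq_natDegree_of_commute hirr hsep hcomm, natDegree_of_a_ne_zero ha]
  decide

end Cubic

theorem cubic_form_ne_zero_of_isCoprime {n d : ℤ} (h : IsCoprime n d) :
    2 * n ^ 3 - 3 * n ^ 2 * d - 2 * n * d ^ 2 + d ^ 3 ≠ 0 := by
  intro hF
  have hmod : ∀ a b : ZMod 3, 2 * a ^ 3 - 3 * a ^ 2 * b - 2 * a * b ^ 2 + b ^ 3 = 0 →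
      a = 0 ∧ b = 0 := by
    decide
  obtain ⟨hn, hd⟩ := hmod n d (by exact_mod_cast congrArg (Int.cast : ℤ → ZMod 3) hF)
  rw [ZMod.intCast_zmod_eq_zero_iff_dvd] at hn hd
  exact absurd (h.isUnit_of_dvd' hn hd) (by decide)

theorem cubic_eval_rat_ne_zero (r : ℚ) : 2 * r ^ 3 - 3 * r ^ 2 - 2 * r + 1 ≠ 0 := by
  intro hr
  refine cubic_form_ne_zero_of_isCoprime r.isCoprime_num_den ?_
  have hF : ((2 * r.num ^ 3 - 3 * r.num ^ 2 * r.den - 2 * r.num * r.den ^ 2 + r.den ^ 3 : ℤ) : ℚ)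
      = 0 := by
    push_cast
    rw [← Rat.mul_den_eq_num]
    linear_combination (r.den : ℚ) ^ 3 * hr
  exact_mod_cast hF

open Polynomial in
/-- The polynomial `2X³ − 3X² − 2X + 1 ∈ ℚ[X]` is irreducible and the Galois group of
its splitting field over ℚ is not commutative. -/
theorem cubic_irreducible_nonabelian_gal :
    Irreducible (2 * X ^ 3 - 3 * X ^ 2 - 2 * X + 1 : ℚ[X]) ∧
    ¬ ∀ σ τ : (2 * X ^ 3 - 3 * X ^ 2 - 2 * X + 1 : ℚ[X]).Gal, σ * τ = τ * σ := by
  have hP : (⟨2, -3, -2, 1⟩ : Cubic ℚ).toPoly = 2 * X ^ 3 - 3 * X ^ 2 - 2 * X + 1 := by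
    simp only [Cubic.toPoly, C_neg, C_1, C_ofNat]
    ring
  rw [← hP]
  have hirr : Irreducible (⟨2, -3, -2, 1⟩ : Cubic ℚ).toPoly := by
    refine irreducible_of_degree_le_three_of_not_isRoot ?_ fun r hr => cubic_eval_rat_ne_zero r ?_
    · rw [Cubic.natDegree_of_a_ne_zero' two_ne_zero]
      decide
    · simpa [hP] using hr
  refine ⟨hirr, fun hcomm => ?_⟩
  have hdiscr : (⟨2, -3, -2, 1⟩ : Cubic ℚ).discr = 316 := by norm_num [Cubic.discr]
  have h316 : ¬ IsSquare (316 : ℚ) := by norm_num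
  exact h316 (hdiscr ▸ Cubic.isSquare_discr_of_commute two_ne_zero hirr hirr.separable hcomm)
end

section
/- Let n be a positive integer, ν a prime element of the Gaussian integers ℤ[i] with Nm(ν) = n, and r, s, λ integers such that λ² + rλ + s ≡ 0 (mod n), 4s − r² > 0, and 4s − r² is not a perfect square. Let (z₁, z₂) ∈ ℤ[i] × ℤ[i] with (z₁, z₂) ≠ (0, 0) and ν dividing z₁ + λ·z₂ in ℤ[i]. Then (1 + |r| + s)² · (max(Nm(z₁), Nm(z₂)))² ≥ n; equivalently, max(|z₁|, |z₂|) ≥ √(Nm ν)^{1/2} / √(1 + |r| + s) = n^{1/4}/√(1+|r|+s). -/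
/-! With `w = z₁² − r z₁ z₂ + s z₂²`, the congruence `z₁ ≡ −λ z₂ (mod ν)` gives
`w ≡ (λ² + rλ + s) z₂² ≡ 0 (mod ν)`, so `n = Nm ν` divides `Nm w`. Since
`4w = (2z₁ − r z₂)² + (4s − r²) z₂²` and `−(4s − r²)` is not a square in `ℚ(i)`, `w ≠ 0`,
hence `n ≤ Nm w = |w|² ≤ ((1 + |r| + s) · max(|z₁|, |z₂|)²)²`. -/

theorem dvd_sq_sub_mul_add_mul_sq_of_dvd {R : Type*} [CommRing R] {a x y r s lam : R}
    (hxy : a ∣ x + lam * y) (hlam : a ∣ lam ^ 2 + r * lam + s) :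
    a ∣ x ^ 2 - r * x * y + s * y ^ 2 := by
  have key : x ^ 2 - r * x * y + s * y ^ 2
      = (x + lam * y) * (x - (r + lam) * y) + (lam ^ 2 + r * lam + s) * y ^ 2 := by ring
  rw [key]
  exact dvd_add (hxy.mul_right _) (hlam.mul_right _)

theorem norm_sq_sub_mul_add_mul_sq_le {R : Type*} [SeminormedRing R] (r s x y : R) {M : ℝ}
    (hx : ‖x‖ ^ 2 ≤ M) (hy : ‖y‖ ^ 2 ≤ M) :
    ‖x ^ 2 - r * x * y + s * y ^ 2‖ ≤ (1 + ‖r‖ + ‖s‖) * M := by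
  have hxy : ‖x‖ * ‖y‖ ≤ M := by nlinarith [sq_nonneg (‖x‖ - ‖y‖)]
  have hrxy : ‖r * x * y‖ ≤ ‖r‖ * (‖x‖ * ‖y‖) := by
    rw [mul_assoc]
    exact (norm_mul_le _ _).trans (by gcongr; exact norm_mul_le _ _)
  have hsy : ‖s * y ^ 2‖ ≤ ‖s‖ * ‖y‖ ^ 2 :=
    (norm_mul_le _ _).trans (by gcongr; exact norm_pow_le' _ two_pos)
  calc ‖x ^ 2 - r * x * y + s * y ^ 2‖
      ≤ ‖x ^ 2‖ + ‖r * x * y‖ + ‖s * y ^ 2‖ :=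
        (norm_add_le _ _).trans (by gcongr; exact norm_sub_le _ _)
    _ ≤ ‖x‖ ^ 2 + ‖r‖ * (‖x‖ * ‖y‖) + ‖s‖ * ‖y‖ ^ 2 := by
        gcongr
        exact norm_pow_le' _ two_pos
    _ ≤ 1 * M + ‖r‖ * M + ‖s‖ * M := by gcongr; linarith
    _ = (1 + ‖r‖ + ‖s‖) * M := by ring

theorem Int.isSquare_of_isSquare_mul_sq {k c : ℤ} (hc : c ≠ 0) (h : IsSquare (k * c ^ 2)) :
    IsSquare k := by
  obtain ⟨a, ha⟩ := h
  rw [← Rat.isSquare_intCast_iff]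
  refine ⟨a / c, ?_⟩
  field_simp
  exact_mod_cast ha.trans (sq a).symm

namespace GaussianInt

theorem isSquare_of_sq_eq_intCast {z : GaussianInt} {m : ℤ} (hm : 0 ≤ m)
    (h : z ^ 2 = m) : IsSquare m := by
  have hre : z.re * z.re + -(z.im * z.im) = m := by simpa [sq] using congrArg Zsqrtd.re h
  have him : z.re * z.im + z.im * z.re = 0 := by simpa [sq] using congrArg Zsqrtd.im h
  refine ⟨z.re, ?_⟩
  rcases mul_eq_zero.mp (by linarith : z.re * z.im = 0) with h0 | h0
  · nlinarith [sq_nonneg z.im]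
  · rw [← hre, h0]; ring

theorem sq_sub_mul_add_mul_sq_ne_zero {r s : ℤ} (hpos : 0 < 4 * s - r ^ 2)
    (hnsq : ¬ IsSquare (4 * s - r ^ 2)) {x y : GaussianInt} (hxy : ¬ (x = 0 ∧ y = 0)) :
    x ^ 2 - r * x * y + s * y ^ 2 ≠ 0 := by
  intro h
  set u := 2 * x - r * y
  have hu : u ^ 2 = -(((4 * s - r ^ 2 : ℤ) : GaussianInt) * y ^ 2) := by
    push_cast
    linear_combination (4 : GaussianInt) * h
  rcases eq_or_ne y 0 with rfl | hy
  · refine hxy ⟨?_, rfl⟩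
    have h2x : (2 * x) ^ 2 = 0 := by simpa [u] using hu
    simpa using h2x
  · -- the witness `i u ȳ` comes from `(u / y)² = -(4s - r²)`
    have hi : (⟨0, 1⟩ : GaussianInt) ^ 2 = -1 := by decide
    have hsq : (⟨0, 1⟩ * u * star y) ^ 2 = (((4 * s - r ^ 2) * y.norm ^ 2 : ℤ) : GaussianInt) := by
      rw [Int.cast_mul, Int.cast_pow, Zsqrtd.norm_eq_mul_conj]
      linear_combination (u * star y) ^ 2 * hi - (star y) ^ 2 * hu
    exact hnsq <| Int.isSquare_of_isSquare_mul_sq (norm_pos.mpr hy).ne' <|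
      isSquare_of_sq_eq_intCast (by positivity) hsq

theorem norm_le_norm_of_dvd {a b : GaussianInt} (hb : b ≠ 0) (h : a ∣ b) : a.norm ≤ b.norm := by
  obtain ⟨c, rfl⟩ := h
  exact Int.le_of_dvd (norm_pos.mpr hb) (Zsqrtd.norm_mul a c ▸ dvd_mul_right _ _)

theorem dvd_intCast_norm (a : GaussianInt) : a ∣ (a.norm : GaussianInt) :=
  Zsqrtd.norm_eq_mul_conj a ▸ dvd_mul_right _ _

theorem norm_sq_sub_mul_add_mul_sq_le (r s : ℤ) (x y : GaussianInt) :
    (x ^ 2 - r * x * y + s * y ^ 2).norm ≤ (1 + |r| + |s|) ^ 2 * max x.norm y.norm ^ 2 := by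
  have hnorm (z : GaussianInt) : (z.norm : ℝ) = ‖(z : ℂ)‖ ^ 2 := by
    rw [intCast_real_norm, Complex.sq_norm]
  have hx : ‖(x : ℂ)‖ ^ 2 ≤ (max x.norm y.norm : ℤ) := by
    rw [← hnorm]; exact_mod_cast le_max_left _ _
  have hy : ‖(y : ℂ)‖ ^ 2 ≤ (max x.norm y.norm : ℤ) := by
    rw [← hnorm]; exact_mod_cast le_max_right _ _
  have hw := pow_le_pow_left₀ (_root_.norm_nonneg _)
    (_root_.norm_sq_sub_mul_add_mul_sq_le (r : ℂ) s _ _ hx hy) 2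
  rw [← @Int.cast_le ℝ, hnorm]
  simp only [map_add, map_sub, map_mul, map_pow, map_intCast, Complex.norm_intCast, mul_pow]
    at hw ⊢
  exact_mod_cast hw

end GaussianInt

theorem glv_kernel_vector_lower_bound_general (n : ℕ)
    (ν : Zsqrtd (-1)) (hnorm : Zsqrtd.norm ν = (n : ℤ))
    (r s lam : ℤ)
    (hlam : (n : ℤ) ∣ lam ^ 2 + r * lam + s)
    (hpos : 0 < 4 * s - r ^ 2) (hnsq : ¬ IsSquare (4 * s - r ^ 2))
    (z₁ z₂ : Zsqrtd (-1)) (hz : ¬ (z₁ = 0 ∧ z₂ = 0))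
    (hdvd : ν ∣ z₁ + (lam : Zsqrtd (-1)) * z₂) :
    (n : ℤ) ≤ (1 + |r| + s) ^ 2 * (max (Zsqrtd.norm z₁) (Zsqrtd.norm z₂)) ^ 2 := by
  have hs : 0 < s := by nlinarith [sq_nonneg r]
  have hν_lam : ν ∣ (lam : GaussianInt) ^ 2 + r * lam + s := by
    exact_mod_cast (GaussianInt.dvd_intCast_norm ν).trans (hnorm ▸ Int.cast_dvd_cast _ _ hlam)
  have hν_w := dvd_sq_sub_mul_add_mul_sq_of_dvd hdvd hν_lam
  calc (n : ℤ) = ν.norm := hnorm.symm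
    _ ≤ (z₁ ^ 2 - r * z₁ * z₂ + s * z₂ ^ 2).norm :=
      GaussianInt.norm_le_norm_of_dvd (GaussianInt.sq_sub_mul_add_mul_sq_ne_zero hpos hnsq hz) hν_w
    _ ≤ (1 + |r| + |s|) ^ 2 * max z₁.norm z₂.norm ^ 2 :=
      GaussianInt.norm_sq_sub_mul_add_mul_sq_le r s z₁ z₂
    _ = (1 + |r| + s) ^ 2 * max z₁.norm z₂.norm ^ 2 := by rw [abs_of_pos hs]

/-- Lemma 6 of the paper (lower bound on generic vectors of `ker F`): if `ν` is a
Gaussian prime of norm `n`, `λ² + rλ + s ≡ 0 (mod n)`, `X² + rX + s` is irreducible over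
`ℚ(i)` (encoded by `4s − r² > 0` not a perfect square), and `(z₁, z₂) ≠ (0,0)` satisfies
`ν ∣ z₁ + λz₂` in `ℤ[i]`, then `(1 + |r| + s)²·max(Nm z₁, Nm z₂)² ≥ n`, i.e.
`max(|z₁|, |z₂|) ≥ n^(1/4)/√(1 + |r| + s)`. -/
theorem glv_kernel_vector_lower_bound (n : ℕ) (hn : 0 < n)
    (ν : Zsqrtd (-1)) (hν : Prime ν) (hnorm : Zsqrtd.norm ν = (n : ℤ))
    (r s lam : ℤ)
    (hlam : (n : ℤ) ∣ lam ^ 2 + r * lam + s)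
    (hpos : 0 < 4 * s - r ^ 2) (hnsq : ¬ IsSquare (4 * s - r ^ 2))
    (z₁ z₂ : Zsqrtd (-1)) (hz : ¬ (z₁ = 0 ∧ z₂ = 0))
    (hdvd : ν ∣ z₁ + (lam : Zsqrtd (-1)) * z₂) :
    (n : ℤ) ≤ (1 + |r| + s) ^ 2 * (max (Zsqrtd.norm z₁) (Zsqrtd.norm z₂)) ^ 2 :=
  glv_kernel_vector_lower_bound_general n ν hnorm r s lam hlam hpos hnsq z₁ z₂ hz hdvd
end
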